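/- arXiv:1909.13680 — 5 statements merged into one kernel-verified Lean document; each statement's English description precedes it below -/
import Mathlib

section
/- Let a < b be real numbers, let α > 0 and β > 0, and let g : [a,b] → ℝ be continuous. Then for every t ∈ [a,b], (1/Γ(α)) ∫_a^t (t−s)^{α−1} [ (1/Γ(β)) ∫_a^s (s−u)^{β−1} g(u) du ] ds = (1/Γ(α+β)) ∫_a^t (t−s)^{α+β−1} g(s) ds; that is, the Riemann–Liouville fractional integrals satisfy the semigroup property I^α_a I^β_a g = I^{α+β}_a g. -/
open MeasureTheory intervalIntegral Real Set


lemma realBeta {α β : ℝ} (hα : 0 < α) (hβ : 0 < β) :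
    ∫ x in (0:ℝ)..1, x ^ (α - 1) * (1 - x) ^ (β - 1) =
      Real.Gamma α * Real.Gamma β / Real.Gamma (α + β) := by
  have key : Complex.Gamma α * Complex.Gamma β
      = Complex.Gamma (α + β) * Complex.betaIntegral α β :=
    Complex.Gamma_mul_Gamma_eq_betaIntegral (by simpa using hα) (by simpa using hβ)
  have hcoe : Complex.betaIntegral α β
      = ((∫ x in (0:ℝ)..1, x ^ (α - 1) * (1 - x) ^ (β - 1) : ℝ) : ℂ) := by
    rw [Complex.betaIntegral, ← intervalIntegral.integral_ofReal]
    refine intervalIntegral.integral_congr fun x hx => ?_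
    rw [Set.uIcc_of_le (by norm_num : (0:ℝ) ≤ 1)] at hx
    rw [Complex.ofReal_mul, Complex.ofReal_cpow hx.1, Complex.ofReal_cpow (by linarith [hx.2])]
    push_cast
    ring
  rw [hcoe, ← Complex.ofReal_add] at key
  rw [Complex.Gamma_ofReal, Complex.Gamma_ofReal, Complex.Gamma_ofReal,
    ← Complex.ofReal_mul, ← Complex.ofReal_mul] at key
  have := Complex.ofReal_injective key
  have hG : Real.Gamma (α + β) ≠ 0 := (Real.Gamma_pos_of_pos (by linarith)).ne'
  field_simp
  linarith [this]

lemma kernelInt {α β u t : ℝ} (hα : 0 < α) (hβ : 0 < β) (hut : u < t) :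
    ∫ s in u..t, (t - s) ^ (α - 1) * (s - u) ^ (β - 1) =
      (t - u) ^ (α + β - 1) * (Real.Gamma α * Real.Gamma β / Real.Gamma (α + β)) := by
  have hd : (0:ℝ) < t - u := by linarith
  have hsub := intervalIntegral.integral_comp_mul_add
    (a := (0:ℝ)) (b := 1) (f := fun s => (t - s) ^ (α - 1) * (s - u) ^ (β - 1))
    (c := t - u) hd.ne' u
  simp only [mul_zero, zero_add, mul_one, sub_add_cancel, smul_eq_mul] at hsub
  have h2 : ∀ x ∈ Set.uIcc (0:ℝ) 1,
      (t - ((t - u) * x + u)) ^ (α - 1) * ((t - u) * x + u - u) ^ (β - 1)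
        = (t - u) ^ (α + β - 2) * ((1 - x) ^ (α - 1) * x ^ (β - 1)) := by
    intro x hx
    rw [Set.uIcc_of_le (by norm_num : (0:ℝ) ≤ 1)] at hx
    have e1 : t - ((t - u) * x + u) = (t - u) * (1 - x) := by ring
    have e2 : (t - u) * x + u - u = (t - u) * x := by ring
    rw [e1, e2, Real.mul_rpow hd.le (by linarith [hx.2]), Real.mul_rpow hd.le hx.1,
      mul_mul_mul_comm, ← Real.rpow_add hd, show α - 1 + (β - 1) = α + β - 2 by ring]
  rw [intervalIntegral.integral_congr h2, intervalIntegral.integral_const_mul] at hsub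
  have hbeta : ∫ x in (0:ℝ)..1, (1 - x) ^ (α - 1) * x ^ (β - 1)
      = Real.Gamma α * Real.Gamma β / Real.Gamma (α + β) := by
    have hb := realBeta hβ hα
    rw [show β + α = α + β by ring, mul_comm (Real.Gamma β)] at hb
    rw [← hb]
    exact intervalIntegral.integral_congr fun x hx => by ring
  rw [hbeta] at hsub
  have e3 : (t - u) * (t - u) ^ (α + β - 2) = (t - u) ^ (α + β - 1) := by
    rw [show α + β - 1 = 1 + (α + β - 2) by ring, Real.rpow_add hd, Real.rpow_one]
  have : ∫ s in u..t, (t - s) ^ (α - 1) * (s - u) ^ (β - 1)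
      = (t - u) * ((t - u) ^ (α + β - 2) * (Real.Gamma α * Real.Gamma β / Real.Gamma (α + β))) := by
    rw [hsub]; field_simp
  rw [this, ← mul_assoc, e3]

lemma fubini_step {α β a t : ℝ} (hα : 0 < α) (hβ : 0 < β) (hat : a < t)
    (G : ℝ → ℝ) (hGc : Continuous G) :
    ∫ s in a..t, (t - s) ^ (α - 1) * ∫ u in a..s, (s - u) ^ (β - 1) * G u =
      (Real.Gamma α * Real.Gamma β / Real.Gamma (α + β)) *
        ∫ u in a..t, (t - u) ^ (α + β - 1) * G u := by
  set μ : Measure ℝ := volume.restrict (Set.Ioo a t) with hμ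
  set f : ℝ → ℝ → ℝ := fun s u =>
    if u < s then (t - s) ^ (α - 1) * ((s - u) ^ (β - 1) * G u) else 0 with hf
  obtain ⟨C, hC⟩ := (isCompact_Icc (a := a) (b := t)).exists_bound_of_continuousOn
    hGc.continuousOn
  have hC0 : 0 ≤ C := le_trans (norm_nonneg _) (hC a ⟨le_refl a, hat.le⟩)
  -- kernel integrabilities
  have hk1 : IntervalIntegrable (fun s => (t - s) ^ (α - 1)) volume a t := by
    simpa using (intervalIntegral.intervalIntegrable_rpow' (a := t - a) (b := t - t)
      (show (-1:ℝ) < α - 1 by linarith)).comp_sub_left t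
  have hk2 : ∀ s : ℝ, IntervalIntegrable (fun u => (s - u) ^ (β - 1)) volume a s := by
    intro s
    simpa using (intervalIntegral.intervalIntegrable_rpow' (a := s - a) (b := s - s)
      (show (-1:ℝ) < β - 1 by linarith)).comp_sub_left s
  -- value of the elementary inner integral
  have hval : ∀ s : ℝ, ∫ u in a..s, (s - u) ^ (β - 1) = (s - a) ^ β / β := by
    intro s
    rw [intervalIntegral.integral_comp_sub_left (fun v => v ^ (β - 1)) s, sub_self,
      integral_rpow (Or.inl (by linarith : (-1:ℝ) < β - 1)),
      show β - 1 + 1 = β by ring, Real.zero_rpow hβ.ne']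
    ring
  -- measurability
  have hSm : MeasurableSet {p : ℝ × ℝ | p.2 < p.1} :=
    measurableSet_lt measurable_snd measurable_fst
  have huncurry : Function.uncurry f = Set.indicator {p : ℝ × ℝ | p.2 < p.1}
      (fun p => (t - p.1) ^ (α - 1) * ((p.1 - p.2) ^ (β - 1) * G p.2)) := by
    ext p
    simp only [Function.uncurry, hf, Set.indicator_apply, Set.mem_setOf_eq]
  have hmeas : AEStronglyMeasurable (Function.uncurry f) (μ.prod μ) := by
    rw [huncurry, hμ, Measure.prod_restrict]
    rw [aestronglyMeasurable_indicator_iff hSm, Measure.restrict_restrict hSm]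
    refine ContinuousOn.aestronglyMeasurable ?_ (hSm.inter (measurableSet_Ioo.prod
      measurableSet_Ioo))
    intro p hp
    have h1 : p.2 < p.1 := hp.1
    have h2 : p.1 < t := hp.2.1.2
    refine ContinuousAt.continuousWithinAt (ContinuousAt.mul ?_ (ContinuousAt.mul ?_ ?_))
    · exact ContinuousAt.rpow_const ((continuous_const.sub continuous_fst).continuousAt)
        (Or.inl (sub_ne_zero.2 h2.ne'))
    · exact ContinuousAt.rpow_const ((continuous_fst.sub continuous_snd).continuousAt)
        (Or.inl (sub_ne_zero.2 h1.ne'))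
    · exact (hGc.comp continuous_snd).continuousAt
  -- description of the slices of f
  have hslice : ∀ s : ℝ, f s = (Set.Iio s).indicator
      (fun u => (t - s) ^ (α - 1) * ((s - u) ^ (β - 1) * G u)) := by
    intro s; ext u; simp only [hf, Set.indicator_apply, Set.mem_Iio]
  have hIio : ∀ s ∈ Set.Ioo a t, Set.Iio s ∩ Set.Ioo a t = Set.Ioo a s := by
    intro s hs
    ext x
    constructor
    · rintro ⟨hx1, hx2, _⟩; exact ⟨hx2, hx1⟩
    · rintro ⟨hx1, hx2⟩; exact ⟨hx2, hx1, hx2.trans hs.2⟩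
  -- integrability of slices
  have hintslice : ∀ (s : ℝ), s ∈ Set.Ioo a t → ∀ (H : ℝ → ℝ), Continuous H →
      Integrable ((Set.Iio s).indicator
        (fun u => (t - s) ^ (α - 1) * ((s - u) ^ (β - 1) * H u))) μ := by
    intro s hs H hHc
    rw [hμ, integrable_indicator_iff measurableSet_Iio]
    unfold IntegrableOn
    rw [Measure.restrict_restrict measurableSet_Iio, hIio s hs]
    have : IntervalIntegrable (fun u => (t - s) ^ (α - 1) * ((s - u) ^ (β - 1) * H u))
        volume a s := (((hk2 s).mul_continuousOn hHc.continuousOn).const_mul _)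
    exact ((intervalIntegrable_iff_integrableOn_Ioc_of_le hs.1.le).mp this).mono_set
      Set.Ioo_subset_Ioc_self
  -- value of ∫ f s ∂μ
  have hslval : ∀ (s : ℝ), s ∈ Set.Ioo a t →
      ∫ u, f s u ∂μ = (t - s) ^ (α - 1) * ∫ u in a..s, (s - u) ^ (β - 1) * G u := by
    intro s hs
    rw [hslice s, hμ, MeasureTheory.integral_indicator measurableSet_Iio,
      Measure.restrict_restrict measurableSet_Iio, hIio s hs,
      MeasureTheory.integral_const_mul, intervalIntegral.integral_of_le hs.1.le,
      MeasureTheory.integral_Ioc_eq_integral_Ioo]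
  -- bound on the integral of ‖f s ·‖
  have hDint : ∀ s ∈ Set.Ioo a t, Integrable ((Set.Iio s).indicator
      (fun u => (t - s) ^ (α - 1) * ((s - u) ^ (β - 1) * C))) μ :=
    fun s hs => hintslice s hs (fun _ => C) continuous_const
  have hnormbound : ∀ s ∈ Set.Ioo a t,
      ∫ u, ‖f s u‖ ∂μ ≤ (t - s) ^ (α - 1) * (C * ((t - a) ^ β / β)) := by
    intro s hs
    have hts : (0:ℝ) ≤ t - s := by linarith [hs.2]
    have step1 : ∫ u, ‖f s u‖ ∂μ ≤ ∫ u, (Set.Iio s).indicator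
        (fun u => (t - s) ^ (α - 1) * ((s - u) ^ (β - 1) * C)) u ∂μ := by
      refine integral_mono_of_nonneg (Filter.Eventually.of_forall fun u => norm_nonneg _)
        (hDint s hs) ?_
      rw [hμ]
      filter_upwards [ae_restrict_mem measurableSet_Ioo] with u hu
      by_cases h : u < s
      · have hsu : (0:ℝ) ≤ s - u := by linarith
        simp only [hf, if_pos h, Set.indicator_apply, Set.mem_Iio]
        rw [Real.norm_eq_abs, abs_mul, abs_mul, abs_of_nonneg (Real.rpow_nonneg hts _),
          abs_of_nonneg (Real.rpow_nonneg hsu _)]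
        have hgu : |G u| ≤ C := hC u ⟨hu.1.le, hu.2.le⟩
        exact mul_le_mul_of_nonneg_left
          (mul_le_mul_of_nonneg_left hgu (Real.rpow_nonneg hsu _)) (Real.rpow_nonneg hts _)
      · simp [hf, h, Set.indicator_apply]
    have step2 : ∫ u, (Set.Iio s).indicator
        (fun u => (t - s) ^ (α - 1) * ((s - u) ^ (β - 1) * C)) u ∂μ
        = (t - s) ^ (α - 1) * (((s - a) ^ β / β) * C) := by
      rw [hμ, MeasureTheory.integral_indicator measurableSet_Iio,
        Measure.restrict_restrict measurableSet_Iio, hIio s hs,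
        MeasureTheory.integral_const_mul]
      congr 1
      rw [← MeasureTheory.integral_Ioc_eq_integral_Ioo,
        ← intervalIntegral.integral_of_le hs.1.le,
        intervalIntegral.integral_mul_const, hval s]
    have step3 : (t - s) ^ (α - 1) * (((s - a) ^ β / β) * C)
        ≤ (t - s) ^ (α - 1) * (C * ((t - a) ^ β / β)) := by
      rw [mul_comm ((s - a) ^ β / β) C]
      have h1 : (s - a) ^ β ≤ (t - a) ^ β :=
        Real.rpow_le_rpow (by linarith [hs.1]) (by linarith [hs.2]) hβ.le
      have h2 : (0:ℝ) ≤ (t - s) ^ (α - 1) := Real.rpow_nonneg hts _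
      gcongr
    calc ∫ u, ‖f s u‖ ∂μ ≤ _ := step1
      _ = _ := step2
      _ ≤ _ := step3
  -- integrability on the product
  have hprod : Integrable (Function.uncurry f) (μ.prod μ) := by
    rw [MeasureTheory.integrable_prod_iff hmeas]
    constructor
    · rw [hμ]
      filter_upwards [ae_restrict_mem measurableSet_Ioo] with s hs
      have := hintslice s hs G hGc
      rw [← hslice s] at this
      simpa using this
    · have hBint : Integrable (fun s => (t - s) ^ (α - 1) * (C * ((t - a) ^ β / β))) μ := by
        rw [hμ]
        exact (((intervalIntegrable_iff_integrableOn_Ioc_of_le hat.le).mp hk1).mono_set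
          Set.Ioo_subset_Ioc_self).mul_const _
      refine hBint.mono' hmeas.norm.integral_prod_right' ?_
      rw [hμ]
      filter_upwards [ae_restrict_mem measurableSet_Ioo] with s hs
      rw [Real.norm_eq_abs, abs_of_nonneg (integral_nonneg fun u => norm_nonneg _)]
      exact hnormbound s hs
  have hswap := MeasureTheory.integral_integral_swap (f := f) hprod
  -- evaluate the swapped inner integral
  have hIoi : ∀ u ∈ Set.Ioo a t, Set.Ioi u ∩ Set.Ioo a t = Set.Ioo u t := by
    intro u hu
    ext x
    constructor
    · rintro ⟨hx1, _, hx2⟩; exact ⟨hx1, hx2⟩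
    · rintro ⟨hx1, hx2⟩; exact ⟨hx1, hu.1.trans hx1, hx2⟩
  have hcol : ∀ u ∈ Set.Ioo a t, ∫ s, f s u ∂μ =
      ((t - u) ^ (α + β - 1) * (Real.Gamma α * Real.Gamma β / Real.Gamma (α + β))) * G u := by
    intro u hu
    have hcolslice : (fun s => f s u) = (Set.Ioi u).indicator
        (fun s => ((t - s) ^ (α - 1) * (s - u) ^ (β - 1)) * G u) := by
      ext s
      simp only [hf, Set.indicator_apply, Set.mem_Ioi]
      split_ifs
      · ring
      · rfl
    rw [hcolslice, hμ, MeasureTheory.integral_indicator measurableSet_Ioi,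
      Measure.restrict_restrict measurableSet_Ioi, hIoi u hu,
      MeasureTheory.integral_mul_const,
      ← MeasureTheory.integral_Ioc_eq_integral_Ioo,
      ← intervalIntegral.integral_of_le hu.2.le, kernelInt hα hβ hu.2]
  -- assemble
  rw [intervalIntegral.integral_of_le hat.le, MeasureTheory.integral_Ioc_eq_integral_Ioo,
    intervalIntegral.integral_of_le hat.le, MeasureTheory.integral_Ioc_eq_integral_Ioo]
  have L1 : ∫ s in Set.Ioo a t, ((t - s) ^ (α - 1) * ∫ u in a..s, (s - u) ^ (β - 1) * G u)
      = ∫ s, (∫ u, f s u ∂μ) ∂μ :=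
    (setIntegral_congr_fun measurableSet_Ioo fun s hs => (hslval s hs).symm)
  have L2 : ∫ u, (∫ s, f s u ∂μ) ∂μ = ∫ u in Set.Ioo a t,
      ((Real.Gamma α * Real.Gamma β / Real.Gamma (α + β)) *
        ((t - u) ^ (α + β - 1) * G u)) :=
    setIntegral_congr_fun measurableSet_Ioo fun u hu => by rw [hcol u hu]; ring
  rw [L1, hswap, L2, MeasureTheory.integral_const_mul]

/-- **Semigroup property of Riemann–Liouville fractional integrals.**
Let `a < b`, `α > 0`, `β > 0`, and `g : [a,b] → ℝ` continuous.  For every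
`t ∈ [a,b]`,
`(1/Γ(α)) ∫_a^t (t−s)^{α−1} [(1/Γ(β)) ∫_a^s (s−u)^{β−1} g(u) du] ds
  = (1/Γ(α+β)) ∫_a^t (t−s)^{α+β−1} g(s) ds`,
i.e. `I^α_a (I^β_a g) = I^{α+β}_a g`. -/
theorem rl_integral_semigroup (a b α β : ℝ) (hab : a < b) (hα : 0 < α) (hβ : 0 < β)
    (g : ℝ → ℝ) (hg : ContinuousOn g (Set.Icc a b)) :
    ∀ t ∈ Set.Icc a b,
      (1 / Real.Gamma α) *
          ∫ s in a..t, (t - s) ^ (α - 1) *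
            ((1 / Real.Gamma β) * ∫ u in a..s, (s - u) ^ (β - 1) * g u) =
        (1 / Real.Gamma (α + β)) * ∫ s in a..t, (t - s) ^ (α + β - 1) * g s := by
  intro t ht
  obtain ⟨hat, htb⟩ := ht
  rcases eq_or_lt_of_le hat with rfl | hat'
  · simp
  · obtain ⟨G, hGr⟩ := ContinuousMap.exists_restrict_eq
      (isClosed_Icc (a := a) (b := b)) ⟨_, hg.restrict⟩
    have hGg : ∀ x ∈ Set.Icc a b, G x = g x := by
      intro x hx
      have := ContinuousMap.congr_fun hGr ⟨x, hx⟩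
      simpa using this
    have e1 : ∫ s in a..t, (t - s) ^ (α + β - 1) * g s
        = ∫ s in a..t, (t - s) ^ (α + β - 1) * G s := by
      refine intervalIntegral.integral_congr fun s hs => ?_
      rw [Set.uIcc_of_le hat] at hs
      rw [hGg s ⟨hs.1, hs.2.trans htb⟩]
    have e2 : ∫ s in a..t, (t - s) ^ (α - 1) *
          ((1 / Real.Gamma β) * ∫ u in a..s, (s - u) ^ (β - 1) * g u)
        = ∫ s in a..t, (t - s) ^ (α - 1) *
          ((1 / Real.Gamma β) * ∫ u in a..s, (s - u) ^ (β - 1) * G u) := by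
      refine intervalIntegral.integral_congr fun s hs => ?_
      rw [Set.uIcc_of_le hat] at hs
      have hinner : ∫ u in a..s, (s - u) ^ (β - 1) * g u
          = ∫ u in a..s, (s - u) ^ (β - 1) * G u := by
        refine intervalIntegral.integral_congr fun u hu => ?_
        rw [Set.uIcc_of_le hs.1] at hu
        rw [hGg u ⟨hu.1, (hu.2.trans hs.2).trans htb⟩]
      rw [hinner]
    rw [e1, e2]
    have e3 : ∫ s in a..t, (t - s) ^ (α - 1) *
          ((1 / Real.Gamma β) * ∫ u in a..s, (s - u) ^ (β - 1) * G u)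
        = (1 / Real.Gamma β) *
          ∫ s in a..t, (t - s) ^ (α - 1) * ∫ u in a..s, (s - u) ^ (β - 1) * G u := by
      rw [← intervalIntegral.integral_const_mul]
      exact intervalIntegral.integral_congr fun s hs => by ring
    rw [e3, fubini_step hα hβ hat' G G.continuous]
    have hGa : Real.Gamma α ≠ 0 := (Real.Gamma_pos_of_pos hα).ne'
    have hGb : Real.Gamma β ≠ 0 := (Real.Gamma_pos_of_pos hβ).ne'
    have hGab : Real.Gamma (α + β) ≠ 0 := (Real.Gamma_pos_of_pos (by linarith)).ne'
    field_simp
end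

section
/- Let a < b be real numbers, let 0 ≤ γ < 1 and α > 0 with γ < α, and let g : (a,b] → ℝ be such that t ↦ (t−a)^γ g(t) extends to a continuous function on [a,b]. Then lim_{t→a^+} (I^α_a g)(t) = 0, i.e., lim_{t→a^+} (1/Γ(α)) ∫_a^t (t−s)^{α−1} g(s) ds = 0. -/
open Set MeasureTheory intervalIntegral Real

/-- Integrability of the beta-type kernel `(y-s)^p * (s-x)^q` on `[x,y]`. -/
lemma beta_kernel_integrable {x y p q : ℝ} (hxy : x < y) (hp : -1 < p) (hq : -1 < q) :
    IntervalIntegrable (fun s => (y - s) ^ p * (s - x) ^ q) volume x y := by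
  set m := (x + y) / 2 with hm
  have hxm : x < m := by simp [hm]; linarith
  have hmy : m < y := by simp [hm]; linarith
  have h1 : IntervalIntegrable (fun s => (y - s) ^ p * (s - x) ^ q) volume x m := by
    have hbase : IntervalIntegrable (fun s : ℝ => (s - x) ^ q) volume x m := by
      simpa using (intervalIntegrable_rpow' hq (a := x - x) (b := m - x)).comp_sub_right x
    have hcont : ContinuousOn (fun s : ℝ => (y - s) ^ p) (Set.uIcc x m) := by
      apply ContinuousOn.rpow_const (by fun_prop)
      intro s hs
      rw [Set.uIcc_of_le hxm.le] at hs
      exact Or.inl (by have := hs.2; intro h; nlinarith [sub_eq_zero.mp h])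
    simpa [mul_comm] using hbase.mul_continuousOn hcont
  have h2 : IntervalIntegrable (fun s => (y - s) ^ p * (s - x) ^ q) volume m y := by
    have hbase : IntervalIntegrable (fun s : ℝ => (y - s) ^ p) volume m y := by
      simpa using (intervalIntegrable_rpow' hp (a := y - m) (b := y - y)).comp_sub_left y
    have hcont : ContinuousOn (fun s : ℝ => (s - x) ^ q) (Set.uIcc m y) := by
      apply ContinuousOn.rpow_const (by fun_prop)
      intro s hs
      rw [Set.uIcc_of_le hmy.le] at hs
      exact Or.inl (by have := hs.1; intro h; nlinarith [sub_eq_zero.mp h])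
    exact hbase.mul_continuousOn hcont
  exact h1.trans h2

/-- Value of the beta-type integral via the affine substitution `s = x + (y-x) u`. -/
lemma beta_kernel_integral {x y p q : ℝ} (hxy : x < y) :
    (∫ s in x..y, (y - s) ^ p * (s - x) ^ q)
      = (y - x) ^ (p + q + 1) * ∫ u in (0:ℝ)..1, (1 - u) ^ p * u ^ q := by
  set c := y - x with hc
  have hc0 : 0 < c := by simp [hc]; linarith
  have step1 : (∫ s in x..y, (y - s) ^ p * (s - x) ^ q)
      = ∫ v in (0:ℝ)..c, (c - v) ^ p * v ^ q := by
    have := intervalIntegral.integral_comp_sub_right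
      (fun v => (c - v) ^ p * v ^ q) x (a := x) (b := y)
    simp only [sub_self] at this
    rw [← this]
    refine intervalIntegral.integral_congr fun s _ => ?_
    have h : c - (s - x) = y - s := by rw [hc]; ring
    rw [h]
  have step2 : (∫ v in (0:ℝ)..c, (c - v) ^ p * v ^ q)
      = c • ∫ u in (0:ℝ)..1, (c - c * u) ^ p * (c * u) ^ q := by
    rw [intervalIntegral.integral_comp_mul_left (fun v => (c - v) ^ p * v ^ q) hc0.ne',
      smul_smul, mul_inv_cancel₀ hc0.ne', one_smul, mul_zero, mul_one]
  have step3 : (∫ u in (0:ℝ)..1, (c - c * u) ^ p * (c * u) ^ q)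
      = c ^ p * c ^ q * ∫ u in (0:ℝ)..1, (1 - u) ^ p * u ^ q := by
    rw [← intervalIntegral.integral_const_mul]
    apply intervalIntegral.integral_congr
    intro u hu
    rw [Set.uIcc_of_le zero_le_one] at hu
    have h1u : 0 ≤ 1 - u := by linarith [hu.2]
    show (c - c * u) ^ p * (c * u) ^ q = c ^ p * c ^ q * ((1 - u) ^ p * u ^ q)
    have hcu : c - c * u = c * (1 - u) := by ring
    rw [hcu, Real.mul_rpow hc0.le h1u, Real.mul_rpow hc0.le hu.1]
    ring
  rw [step1, step2, step3, smul_eq_mul]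
  rw [Real.rpow_add hc0, Real.rpow_add hc0, Real.rpow_one]
  ring

/-- **Vanishing of the fractional integral at the base point.**
Let `a < b`, `0 ≤ γ < 1`, `α > 0` with `γ < α`, and let `g : (a,b] → ℝ` be such
that `t ↦ (t−a)^γ g(t)` extends to a continuous function on `[a,b]`.  Then
`lim_{t→a⁺} (1/Γ(α)) ∫_a^t (t−s)^{α−1} g(s) ds = 0`. -/
theorem rl_integral_tendsto_zero (a b γ α : ℝ) (hab : a < b)
    (hγ0 : 0 ≤ γ) (hγ1 : γ < 1) (hα : 0 < α) (hγα : γ < α) (g : ℝ → ℝ)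
    (hg : ∃ G : ℝ → ℝ, ContinuousOn G (Set.Icc a b) ∧
      ∀ t ∈ Set.Ioc a b, G t = (t - a) ^ γ * g t) :
    Filter.Tendsto (fun t => (1 / Real.Gamma α) * ∫ s in a..t, (t - s) ^ (α - 1) * g s)
      (nhdsWithin a (Set.Ioi a)) (nhds 0) := by
  obtain ⟨G, hGc, hGeq⟩ := hg
  obtain ⟨M, hM⟩ := (isCompact_Icc (a := a) (b := b)).exists_bound_of_continuousOn hGc
  have hM0 : 0 ≤ M := le_trans (norm_nonneg _) (hM a ⟨le_refl a, hab.le⟩)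
  set C : ℝ := ∫ u in (0:ℝ)..1, (1 - u) ^ (α - 1) * u ^ (-γ) with hC
  have hC0 : 0 ≤ C := by
    apply intervalIntegral.integral_nonneg zero_le_one
    intro u hu
    exact mul_nonneg (Real.rpow_nonneg (by linarith [hu.2]) _) (Real.rpow_nonneg hu.1 _)
  set K : ℝ := |1 / Real.Gamma α| * (M * C) with hK
  -- the key bound for t ∈ Ioc a b
  have key : ∀ t ∈ Set.Ioc a b,
      ‖(1 / Real.Gamma α) * ∫ s in a..t, (t - s) ^ (α - 1) * g s‖
        ≤ K * (t - a) ^ (α - γ) := by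
    intro t ht
    have hat : a < t := ht.1
    have hint : IntervalIntegrable (fun s => M * ((t - s) ^ (α - 1) * (s - a) ^ (-γ)))
        volume a t :=
      (beta_kernel_integrable hat (by linarith) (by linarith)).const_mul M
    have hbd : ∀ᵐ s ∂(volume.restrict (Set.uIoc a t)),
        ‖(t - s) ^ (α - 1) * g s‖ ≤ M * ((t - s) ^ (α - 1) * (s - a) ^ (-γ)) := by
      refine (ae_restrict_iff' measurableSet_uIoc).mpr (Filter.Eventually.of_forall ?_)
      intro s hs
      rw [Set.uIoc_of_le hat.le] at hs
      have has : a < s := hs.1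
      have hst : s ≤ t := hs.2
      have hGs := hGeq s ⟨has, hst.trans ht.2⟩
      have hsa : (0:ℝ) < s - a := by linarith
      have hgval : g s = (s - a) ^ (-γ) * G s := by
        rw [hGs, Real.rpow_neg hsa.le]
        field_simp [(Real.rpow_pos_of_pos hsa γ).ne']
      rw [hgval, norm_mul, norm_mul]
      have h1 : ‖(t - s) ^ (α - 1)‖ = (t - s) ^ (α - 1) :=
        abs_of_nonneg (Real.rpow_nonneg (by linarith) _)
      have h2 : ‖(s - a) ^ (-γ)‖ = (s - a) ^ (-γ) :=
        abs_of_nonneg (Real.rpow_nonneg hsa.le _)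
      rw [h1, h2]
      have := hM s ⟨has.le, hst.trans ht.2⟩
      calc (t - s) ^ (α - 1) * ((s - a) ^ (-γ) * ‖G s‖)
          ≤ (t - s) ^ (α - 1) * ((s - a) ^ (-γ) * M) := by
            apply mul_le_mul_of_nonneg_left
              (mul_le_mul_of_nonneg_left this (Real.rpow_nonneg hsa.le _))
              (Real.rpow_nonneg (by linarith) _)
        _ = M * ((t - s) ^ (α - 1) * (s - a) ^ (-γ)) := by ring
    have hnorm := intervalIntegral.norm_integral_le_abs_of_norm_le hbd hint
    have hval : (∫ s in a..t, M * ((t - s) ^ (α - 1) * (s - a) ^ (-γ)))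
        = M * (C * (t - a) ^ (α - γ)) := by
      rw [intervalIntegral.integral_const_mul, beta_kernel_integral hat]
      have : α - 1 + -γ + 1 = α - γ := by ring
      rw [this]; ring
    have habs : |∫ s in a..t, M * ((t - s) ^ (α - 1) * (s - a) ^ (-γ))|
        = M * (C * (t - a) ^ (α - γ)) := by
      rw [hval]
      exact abs_of_nonneg (mul_nonneg hM0 (mul_nonneg hC0
        (Real.rpow_nonneg (by linarith) _)))
    rw [habs] at hnorm
    calc ‖(1 / Real.Gamma α) * ∫ s in a..t, (t - s) ^ (α - 1) * g s‖
        = |1 / Real.Gamma α| * ‖∫ s in a..t, (t - s) ^ (α - 1) * g s‖ := by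
          rw [norm_mul]; rfl
      _ ≤ |1 / Real.Gamma α| * (M * (C * (t - a) ^ (α - γ))) :=
          mul_le_mul_of_nonneg_left hnorm (abs_nonneg _)
      _ = K * (t - a) ^ (α - γ) := by rw [hK]; ring
  -- squeeze
  have hlim : Filter.Tendsto (fun t => K * (t - a) ^ (α - γ))
      (nhdsWithin a (Set.Ioi a)) (nhds 0) := by
    have h1 : Filter.Tendsto (fun t : ℝ => t - a) (nhdsWithin a (Set.Ioi a)) (nhds 0) := by
      have := (continuous_sub_right a).tendsto a
      rw [sub_self] at this
      exact this.mono_left nhdsWithin_le_nhds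
    have h2 : ContinuousAt (fun x : ℝ => x ^ (α - γ)) 0 :=
      Real.continuousAt_rpow_const 0 (α - γ) (Or.inr (by linarith))
    have h3 : Filter.Tendsto (fun t : ℝ => (t - a) ^ (α - γ))
        (nhdsWithin a (Set.Ioi a)) (nhds 0) := by
      have := h2.tendsto.comp h1
      rwa [Real.zero_rpow (by linarith : α - γ ≠ 0)] at this
    simpa using h3.const_mul K
  apply squeeze_zero_norm' _ hlim
  filter_upwards [Ioc_mem_nhdsGT_of_mem ⟨le_refl a, hab⟩] with t ht
  exact key t ht
end

section
/- Fix real numbers a < b, α ∈ (0,1), β ∈ [0,1], and set γ = α + β(1−α). Let c, d, e ∈ ℝ with d ≠ 0 and 1 + c/d ≠ 0, let z ∈ C_{1−γ}[a,b], and suppose the function F(t) = f(t, z(t)) belongs to C_{1−γ}[a,b] and that z satisfies the integral equation z(t) = ((t−a)^{γ−1}/Γ(γ))·(e/(d(1+c/d))) − (1/(1+c/d))·((t−a)^{γ−1}/Γ(γ))·(1/Γ(1−γ+α)) ∫_a^b (b−s)^{α−γ} F(s) ds + (1/Γ(α)) ∫_a^t (t−s)^{α−1} F(s) ds for all t ∈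 (a,b]. Then the boundary condition holds: c·lim_{t→a^+}(I^{1−γ}_a z)(t) + d·lim_{t→b^−}(I^{1−γ}_a z)(t) = e. -/
/-- The Riemann–Liouville fractional integral of order `μ` based at `a`:
`(I^μ_a g)(t) = (1/Γ(μ)) ∫_a^t (t−s)^{μ−1} g(s) ds` for `μ > 0`
(with the usual convention `I⁰_a = id` in the degenerate case `μ = 0`). -/
noncomputable def rlInt (a μ : ℝ) (g : ℝ → ℝ) (t : ℝ) : ℝ :=
  if μ = 0 then g t
  else (1 / Real.Gamma μ) * ∫ s in a..t, (t - s) ^ (μ - 1) * g s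

/-- Membership in the weighted space `C_w[a,b]`: `g : (a,b] → ℝ` is such that
`t ↦ (t−a)^w g(t)` extends to a continuous function on `[a,b]`. -/
def memCw (a b w : ℝ) (g : ℝ → ℝ) : Prop :=
  ∃ G : ℝ → ℝ, ContinuousOn G (Set.Icc a b) ∧
    ∀ t ∈ Set.Ioc a b, G t = (t - a) ^ w * g t

open MeasureTheory intervalIntegral Set Filter Real Topology
/-- The beta kernel `(1-u)^(p-1) * u^(q-1)` is integrable on `(0,1)`. -/
lemma betaKer_integrableOn {p q : ℝ} (hp : 0 < p) (hq : 0 < q) :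
    IntegrableOn (fun u : ℝ => (1 - u) ^ (p - 1) * u ^ (q - 1)) (Set.Ioo 0 1) := by
  have h := (Complex.betaIntegral_convergent (u := (q : ℂ)) (v := (p : ℂ))
    (by simpa using hq) (by simpa using hp)).norm
  rw [intervalIntegrable_iff_integrableOn_Ioc_of_le zero_le_one] at h
  refine ((h.mono_set Set.Ioo_subset_Ioc_self).congr_fun ?_ measurableSet_Ioo)
  intro u hu
  dsimp only
  rw [norm_mul]
  rw [show ((1:ℂ) - u) = ((1 - u : ℝ) : ℂ) by push_cast; ring]
  rw [Complex.norm_cpow_eq_rpow_re_of_pos hu.1, Complex.norm_cpow_eq_rpow_re_of_pos (by simp; linarith [hu.2])]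
  simp [mul_comm]

/-- The real Beta integral evaluates to `Γ(p)Γ(q)/Γ(p+q)`. -/
lemma betaInt_eq {p q : ℝ} (hp : 0 < p) (hq : 0 < q) :
    ∫ u in (0:ℝ)..1, (1 - u) ^ (p - 1) * u ^ (q - 1) =
      Real.Gamma p * Real.Gamma q / Real.Gamma (p + q) := by
  have h := Complex.Gamma_mul_Gamma_eq_betaIntegral (s := (q : ℂ)) (t := (p : ℂ))
    (by simpa using hq) (by simpa using hp)
  have hB : Complex.betaIntegral q p
      = ((∫ u in (0:ℝ)..1, (1 - u) ^ (p - 1) * u ^ (q - 1) : ℝ) : ℂ) := by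
    rw [Complex.betaIntegral, ← intervalIntegral.integral_ofReal]
    refine intervalIntegral.integral_congr fun x hx => ?_
    rw [Set.uIcc_of_le (zero_le_one (α := ℝ))] at hx
    obtain ⟨h0, h1⟩ := hx
    rw [show ((q:ℂ) - 1) = ((q - 1 : ℝ) : ℂ) by push_cast; ring,
        show ((1:ℂ) - (x:ℂ)) = ((1 - x : ℝ) : ℂ) by push_cast; ring,
        show ((p:ℂ) - 1) = ((p - 1 : ℝ) : ℂ) by push_cast; ring,
        ← Complex.ofReal_cpow h0, ← Complex.ofReal_cpow (by linarith)]
    push_cast; ring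
  rw [hB] at h
  rw [show ((q:ℂ) + (p:ℂ)) = ((q + p : ℝ) : ℂ) by push_cast; ring] at h
  rw [Complex.Gamma_ofReal, Complex.Gamma_ofReal, Complex.Gamma_ofReal] at h
  have h' : Real.Gamma q * Real.Gamma p
      = Real.Gamma (q + p) * ∫ u in (0:ℝ)..1, (1 - u) ^ (p - 1) * u ^ (q - 1) := by
    exact_mod_cast h
  have hG : Real.Gamma (q + p) ≠ 0 := (Real.Gamma_pos_of_pos (by linarith)).ne'
  rw [show p + q = q + p by ring]
  field_simp at h' ⊢
  linarith [h']

/-- Affine substitution reducing a weighted integral over `[x,y]` to `[0,1]`. -/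
lemma affine_sub {x y : ℝ} (hxy : x < y) (p q : ℝ) (W : ℝ → ℝ) :
    ∫ s in x..y, (y - s) ^ (p - 1) * (s - x) ^ (q - 1) * W s
      = (y - x) ^ (p + q - 1) *
        ∫ u in (0:ℝ)..1, (1 - u) ^ (p - 1) * u ^ (q - 1) * W (x + (y - x) * u) := by
  have hyx : (0:ℝ) < y - x := by linarith
  have hc : y - x ≠ 0 := hyx.ne'
  have h := intervalIntegral.integral_comp_mul_add (a := (0:ℝ)) (b := 1)
      (f := fun s => (y - s) ^ (p - 1) * (s - x) ^ (q - 1) * W s) hc x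
  rw [mul_zero, zero_add, mul_one] at h
  rw [show y - x + x = y by ring] at h
  rw [smul_eq_mul] at h
  have h2 : ∫ s in x..y, (y - s) ^ (p - 1) * (s - x) ^ (q - 1) * W s
      = (y - x) * ∫ u in (0:ℝ)..1,
          (y - ((y - x) * u + x)) ^ (p - 1) * (((y - x) * u + x) - x) ^ (q - 1)
            * W ((y - x) * u + x) := by
    rw [h, ← mul_assoc, mul_inv_cancel₀ hc, one_mul]
  rw [h2, ← intervalIntegral.integral_const_mul, ← intervalIntegral.integral_const_mul]
  refine intervalIntegral.integral_congr fun u hu => ?_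
  rw [Set.uIcc_of_le (zero_le_one (α := ℝ))] at hu
  obtain ⟨h0, h1⟩ := hu
  have e1 : y - ((y - x) * u + x) = (y - x) * (1 - u) := by ring
  have e2 : (y - x) * u + x - x = (y - x) * u := by ring
  rw [e1, e2, Real.mul_rpow hyx.le (by linarith), Real.mul_rpow hyx.le h0,
    show x + (y - x) * u = (y - x) * u + x by ring]
  rw [show p + q - 1 = (p - 1) + (q - 1) + 1 by ring, Real.rpow_add hyx, Real.rpow_add hyx,
    Real.rpow_one]
  ring

/-- Continuity (as a limit within `Icc a b`) of the parametrized beta-type integral. -/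
lemma tendsto_param {a b : ℝ} (hab : a < b) {p q : ℝ} (hp : 0 < p) (hq : 0 < q)
    {W : ℝ → ℝ} (hW : ContinuousOn W (Set.Icc a b)) {t₀ : ℝ} (ht₀ : t₀ ∈ Set.Icc a b) :
    Filter.Tendsto (fun t => ∫ u in (0:ℝ)..1, (1 - u) ^ (p - 1) * u ^ (q - 1) * W (a + (t - a) * u))
      (nhdsWithin t₀ (Set.Icc a b))
      (nhds (∫ u in (0:ℝ)..1, (1 - u) ^ (p - 1) * u ^ (q - 1) * W (a + (t₀ - a) * u))) := by
  obtain ⟨M, hM⟩ := (isCompact_Icc (a := a) (b := b)).exists_bound_of_continuousOn hW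
  have key : ∀ t ∈ Set.Icc a b, Set.MapsTo (fun u => a + (t - a) * u) (Set.Icc 0 1) (Set.Icc a b) := by
    intro t ht u hu
    have h1 : 0 ≤ (t - a) * u := mul_nonneg (by linarith [ht.1]) hu.1
    have h2 : (t - a) * u ≤ t - a := mul_le_of_le_one_right (by linarith [ht.1]) hu.2
    show a + (t - a) * u ∈ Set.Icc a b
    exact ⟨by linarith, by linarith [ht.2]⟩
  have conv : ∀ t, (∫ u in (0:ℝ)..1, (1 - u) ^ (p - 1) * u ^ (q - 1) * W (a + (t - a) * u))
      = ∫ u in Set.Ioo (0:ℝ) 1, (1 - u) ^ (p - 1) * u ^ (q - 1) * W (a + (t - a) * u) := by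
    intro t
    rw [intervalIntegral.integral_of_le zero_le_one, MeasureTheory.integral_Ioc_eq_integral_Ioo]
  simp only [conv]
  apply MeasureTheory.tendsto_integral_filter_of_dominated_convergence
    (bound := fun u => |M| * ((1 - u) ^ (p - 1) * u ^ (q - 1)))
  · filter_upwards [self_mem_nhdsWithin] with t ht
    apply ContinuousOn.aestronglyMeasurable _ measurableSet_Ioo
    apply ContinuousOn.mul
    · apply ContinuousOn.mul
      · exact (continuous_const.sub continuous_id).continuousOn.rpow_const
          fun u hu => Or.inl (by show (1:ℝ) - u ≠ 0; simp only [Set.mem_Ioo] at hu; exact sub_ne_zero.mpr (by linarith [hu.2]))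
      · exact continuousOn_id.rpow_const fun u hu => Or.inl (ne_of_gt hu.1)
    · exact hW.comp (continuous_const.add (continuous_const.mul continuous_id)).continuousOn
        ((key t ht).mono_left Set.Ioo_subset_Icc_self)
  · filter_upwards [self_mem_nhdsWithin] with t ht
    rw [MeasureTheory.ae_restrict_iff' measurableSet_Ioo]
    filter_upwards with u hu
    have h1 : (0:ℝ) ≤ (1 - u) ^ (p - 1) := Real.rpow_nonneg (by linarith [hu.2]) _
    have h2 : (0:ℝ) ≤ u ^ (q - 1) := Real.rpow_nonneg hu.1.le _
    rw [norm_mul, Real.norm_eq_abs, Real.norm_eq_abs, abs_mul, abs_of_nonneg h1,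
      abs_of_nonneg h2, mul_comm (|M|)]
    apply mul_le_mul_of_nonneg_left _ (mul_nonneg h1 h2)
    exact le_trans (hM _ (key t ht (Set.Ioo_subset_Icc_self hu))) (le_abs_self M)
  · exact (betaKer_integrableOn hp hq).const_mul _
  · rw [MeasureTheory.ae_restrict_iff' measurableSet_Ioo]
    filter_upwards with u hu
    apply Filter.Tendsto.const_mul
    have hcont : ContinuousWithinAt W (Set.Icc a b) (a + (t₀ - a) * u) :=
      hW.continuousWithinAt (key t₀ ht₀ (Set.Ioo_subset_Icc_self hu))
    have haff : ContinuousWithinAt (fun t => a + (t - a) * u) (Set.Icc a b) t₀ :=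
      (continuous_const.add ((continuous_id.sub continuous_const).mul continuous_const)).continuousWithinAt
    exact hcont.tendsto.comp
      (haff.tendsto_nhdsWithin fun t ht => key t ht (Set.Ioo_subset_Icc_self hu))

/-- Shifted beta kernel integrability on `(x,y)`. -/
lemma betaKer_integrableOn' {x y : ℝ} (hxy : x < y) {p q : ℝ} (hp : 0 < p) (hq : 0 < q) :
    IntegrableOn (fun s => (y - s) ^ (p - 1) * (s - x) ^ (q - 1)) (Set.Ioo x y) := by
  have hyx : (0:ℝ) < y - x := by linarith
  have hker : IntervalIntegrable (fun u : ℝ => (1 - u) ^ (p - 1) * u ^ (q - 1)) volume 0 1 := by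
    rw [intervalIntegrable_iff_integrableOn_Ioc_of_le zero_le_one]
    exact (betaKer_integrableOn hp hq).congr_set_ae MeasureTheory.Ioo_ae_eq_Ioc.symm
  have h1 : IntervalIntegrable (fun s : ℝ => (1 - (y - x)⁻¹ * s) ^ (p - 1) *
      ((y - x)⁻¹ * s) ^ (q - 1)) volume 0 (y - x) := by
    have := hker.comp_mul_left (c := (y - x)⁻¹)
    simpa [inv_inv, hyx.ne'] using this
  have h2 : IntervalIntegrable (fun s : ℝ => (1 - (y - x)⁻¹ * (s - x)) ^ (p - 1) *
      ((y - x)⁻¹ * (s - x)) ^ (q - 1)) volume x y := by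
    have := h1.comp_sub_right x
    simpa using this
  rw [intervalIntegrable_iff_integrableOn_Ioc_of_le hxy.le] at h2
  have h3 := (h2.mono_set Set.Ioo_subset_Ioc_self).const_mul ((y - x) ^ (p - 1) * (y - x) ^ (q - 1))
  refine MeasureTheory.IntegrableOn.congr_fun h3 (fun s hs => ?_) measurableSet_Ioo
  have hys : (0:ℝ) ≤ y - s := by linarith [hs.2]
  have hsx : (0:ℝ) ≤ s - x := by linarith [hs.1]
  have e1 : 1 - (y - x)⁻¹ * (s - x) = (y - s) / (y - x) := by field_simp; ring
  have e2 : (y - x)⁻¹ * (s - x) = (s - x) / (y - x) := by ring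
  rw [e1, e2, Real.div_rpow hys hyx.le, Real.div_rpow hsx hyx.le]
  have hp' : (y - x) ^ (p - 1) ≠ 0 := (Real.rpow_pos_of_pos hyx _).ne'
  have hq' : (y - x) ^ (q - 1) ≠ 0 := (Real.rpow_pos_of_pos hyx _).ne'
  field_simp

/-- Representation of a weighted fractional integral via the continuous extension. -/
lemma rep_int {a b γ : ℝ} {g G : ℝ → ℝ}
    (hG : ∀ s ∈ Set.Ioc a b, G s = (s - a) ^ (1 - γ) * g s)
    {t : ℝ} (ht : t ∈ Set.Ioc a b) (p : ℝ) :
    ∫ s in a..t, (t - s) ^ (p - 1) * g s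
      = (t - a) ^ (p + γ - 1) *
          ∫ u in (0:ℝ)..1, (1 - u) ^ (p - 1) * u ^ (γ - 1) * G (a + (t - a) * u) := by
  have hat : a < t := ht.1
  have step : ∫ s in a..t, (t - s) ^ (p - 1) * g s
      = ∫ s in a..t, (t - s) ^ (p - 1) * (s - a) ^ (γ - 1) * G s := by
    rw [intervalIntegral.integral_of_le hat.le, intervalIntegral.integral_of_le hat.le,
      MeasureTheory.integral_Ioc_eq_integral_Ioo, MeasureTheory.integral_Ioc_eq_integral_Ioo]
    refine MeasureTheory.setIntegral_congr_fun measurableSet_Ioo fun s hs => ?_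
    have hsa : (0:ℝ) < s - a := by linarith [hs.1]
    have key : (s - a) ^ (γ - 1) * (s - a) ^ (1 - γ) = 1 := by
      rw [← Real.rpow_add hsa, show γ - 1 + (1 - γ) = 0 by ring, Real.rpow_zero]
    rw [hG s ⟨hs.1, by linarith [hs.2, ht.2]⟩]
    calc (t - s) ^ (p - 1) * g s
        = (t - s) ^ (p - 1) * (((s - a) ^ (γ - 1) * (s - a) ^ (1 - γ)) * g s) := by
          rw [key]; ring
      _ = (t - s) ^ (p - 1) * (s - a) ^ (γ - 1) * ((s - a) ^ (1 - γ) * g s) := by ring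
  rw [step, affine_sub hat p γ G]

lemma affine_sub_one {x y : ℝ} (hxy : x < y) (p q : ℝ) :
    ∫ s in x..y, (y - s) ^ (p - 1) * (s - x) ^ (q - 1)
      = (y - x) ^ (p + q - 1) * ∫ u in (0:ℝ)..1, (1 - u) ^ (p - 1) * u ^ (q - 1) := by
  have h := affine_sub hxy p q (fun _ => 1)
  simpa using h

lemma fubini_step_s9 {a b γ α : ℝ} (hab : a < b) (hα0 : 0 < α) (hγ0 : 0 < γ) (hγ1 : γ < 1)
    {F Fc : ℝ → ℝ} (hFc : ContinuousOn Fc (Set.Icc a b))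
    (hrep : ∀ s ∈ Set.Ioc a b, Fc s = (s - a) ^ (1 - γ) * F s) :
    IntegrableOn (fun s => (b - s) ^ (-γ) * ∫ u in a..s, (s - u) ^ (α - 1) * F u)
      (Set.Ioo a b) ∧
    ∫ s in Set.Ioo a b, (b - s) ^ (-γ) * ∫ u in a..s, (s - u) ^ (α - 1) * F u
      = Real.Gamma (1 - γ) * Real.Gamma α / Real.Gamma (1 - γ + α) *
          ∫ s in a..b, (b - s) ^ (α - γ) * F s := by
  obtain ⟨M, hM⟩ := (isCompact_Icc (a := a) (b := b)).exists_bound_of_continuousOn hFc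
  have hM0 : 0 ≤ M := le_trans (norm_nonneg _) (hM a ⟨le_refl a, hab.le⟩)
  set μ := volume.restrict (Set.Ioo a b) with hμ
  set k : ℝ → ℝ → ℝ :=
    fun s u => (b - s) ^ (-γ) * ((s - u) ^ (α - 1) * ((u - a) ^ (γ - 1) * Fc u)) with hk
  set T : Set (ℝ × ℝ) := {p | a < p.2 ∧ p.2 < p.1} with hT
  have hTmeas : MeasurableSet T := by
    have : T = {p : ℝ × ℝ | a < p.2} ∩ {p : ℝ × ℝ | p.2 < p.1} := rfl
    rw [this]
    exact (measurableSet_lt measurable_const measurable_snd).inter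
      (measurableSet_lt measurable_snd measurable_fst)
  set f : ℝ × ℝ → ℝ := T.indicator (fun p => k p.1 p.2) with hf
  have hFrep : ∀ u, a < u → u ≤ b → (u - a) ^ (γ - 1) * Fc u = F u := by
    intro u h1 h2
    rw [hrep u ⟨h1, h2⟩, ← mul_assoc, ← Real.rpow_add (by linarith : (0:ℝ) < u - a),
      show γ - 1 + (1 - γ) = 0 by ring, Real.rpow_zero, one_mul]
  have hsec : ∀ s : ℝ, (fun u => f (s, u)) = (Set.Ioo a s).indicator (fun u => k s u) := by
    intro s; funext u
    simp only [hf, Set.indicator_apply, Set.mem_setOf_eq, Set.mem_Ioo, hT]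
  have hsec2 : ∀ u : ℝ, a < u → (fun s => f (s, u)) = (Set.Ioi u).indicator (fun s => k s u) := by
    intro u hu; funext s
    simp only [hf, hT, Set.indicator_apply, Set.mem_setOf_eq, Set.mem_Ioi]
    by_cases h : u < s
    · simp [h, hu]
    · simp [h]
  have hsub : ∀ s ∈ Set.Ioo a b, Set.Ioo a s ⊆ Set.Ioo a b :=
    fun s hs u hu => ⟨hu.1, lt_trans hu.2 hs.2⟩
  have hbound : ∀ s ∈ Set.Ioo a b, ∀ u ∈ Set.Ioo a s,
      ‖k s u‖ ≤ (b - s) ^ (-γ) * M * ((s - u) ^ (α - 1) * (u - a) ^ (γ - 1)) := by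
    intro s hs u hu
    have hbs : (0:ℝ) ≤ (b - s) ^ (-γ) := Real.rpow_nonneg (by linarith [hs.2]) _
    have hsu : (0:ℝ) ≤ (s - u) ^ (α - 1) := Real.rpow_nonneg (by linarith [hu.2]) _
    have hua : (0:ℝ) ≤ (u - a) ^ (γ - 1) := Real.rpow_nonneg (by linarith [hu.1]) _
    have hFcu : |Fc u| ≤ M := hM u ⟨hu.1.le, le_trans hu.2.le hs.2.le⟩
    rw [hk]
    simp only [Real.norm_eq_abs]
    rw [abs_mul, abs_mul, abs_mul, abs_of_nonneg hbs, abs_of_nonneg hsu, abs_of_nonneg hua]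
    calc (b - s) ^ (-γ) * ((s - u) ^ (α - 1) * ((u - a) ^ (γ - 1) * |Fc u|))
        ≤ (b - s) ^ (-γ) * ((s - u) ^ (α - 1) * ((u - a) ^ (γ - 1) * M)) := by
          apply mul_le_mul_of_nonneg_left _ hbs
          apply mul_le_mul_of_nonneg_left _ hsu
          exact mul_le_mul_of_nonneg_left hFcu hua
      _ = (b - s) ^ (-γ) * M * ((s - u) ^ (α - 1) * (u - a) ^ (γ - 1)) := by ring
  -- section integrability in u
  have hker1 : ∀ s ∈ Set.Ioo a b, IntegrableOn (fun u => k s u) (Set.Ioo a s) := by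
    intro s hs
    have h1 : IntegrableOn (fun u => (s - u) ^ (α - 1) * (u - a) ^ (γ - 1)) (Set.Ioo a s) :=
      betaKer_integrableOn' hs.1 hα0 hγ0
    have h2 := h1.const_mul ((b - s) ^ (-γ) * M)
    have hmeas : AEStronglyMeasurable (fun u => k s u) (volume.restrict (Set.Ioo a s)) := by
      apply ContinuousOn.aestronglyMeasurable _ measurableSet_Ioo
      apply ContinuousOn.mul continuousOn_const
      apply ContinuousOn.mul
      · exact ContinuousOn.rpow_const (continuous_const.sub continuous_id).continuousOn
          (fun u hu => Or.inl (by simp only [Set.mem_Ioo] at hu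
                                  show s - id u ≠ 0
                                  simp only [id_eq]
                                  exact sub_ne_zero.mpr (ne_of_gt hu.2)))
      apply ContinuousOn.mul
      · exact ContinuousOn.rpow_const (continuous_id.sub continuous_const).continuousOn
          (fun u hu => Or.inl (by simp only [Set.mem_Ioo] at hu
                                  show id u - a ≠ 0
                                  simp only [id_eq]
                                  exact sub_ne_zero.mpr (ne_of_gt hu.1)))
      · exact hFc.mono (fun u hu => ⟨hu.1.le, le_trans hu.2.le hs.2.le⟩)
    refine Integrable.mono' h2 hmeas ?_
    rw [MeasureTheory.ae_restrict_iff' measurableSet_Ioo]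
    filter_upwards with u hu
    calc ‖k s u‖ ≤ (b - s) ^ (-γ) * M * ((s - u) ^ (α - 1) * (u - a) ^ (γ - 1)) :=
          hbound s hs u hu
      _ = (b - s) ^ (-γ) * M * ((s - u) ^ (α - 1) * (u - a) ^ (γ - 1)) := rfl
  -- measurability of f on the product
  have hfmeas : AEStronglyMeasurable f (μ.prod μ) := by
    refine AEStronglyMeasurable.indicator ?_ hTmeas
    have hFc2 : AEStronglyMeasurable (fun p : ℝ × ℝ => Fc p.2) (μ.prod μ) := by
      have heqμ : μ.prod μ = (volume.prod volume).restrict (Set.Ioo a b ×ˢ Set.Ioo a b) := by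
        rw [hμ, Measure.prod_restrict]
      rw [heqμ]
      have hcont : ContinuousOn (fun p : ℝ × ℝ => Fc p.2) (Set.univ ×ˢ Set.Icc a b) :=
        hFc.comp continuous_snd.continuousOn (fun p hp => hp.2)
      exact (hcont.aestronglyMeasurable (MeasurableSet.univ.prod measurableSet_Icc)).mono_measure
        (Measure.restrict_mono (Set.prod_mono (Set.subset_univ _) Set.Ioo_subset_Icc_self) le_rfl)
    have m1 : Measurable fun p : ℝ × ℝ => (b - p.1) ^ (-γ) := by fun_prop
    have m2 : Measurable fun p : ℝ × ℝ => (p.1 - p.2) ^ (α - 1) := by fun_prop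
    have m3 : Measurable fun p : ℝ × ℝ => (p.2 - a) ^ (γ - 1) := by fun_prop
    exact m1.aestronglyMeasurable.mul (m2.aestronglyMeasurable.mul
      (m3.aestronglyMeasurable.mul hFc2))
  set B2 := Real.Gamma α * Real.Gamma γ / Real.Gamma (α + γ) with hB2
  set B1 := Real.Gamma (1 - γ) * Real.Gamma α / Real.Gamma (1 - γ + α) with hB1
  have hbeta2 : ∫ v in (0:ℝ)..1, (1 - v) ^ (α - 1) * v ^ (γ - 1) = B2 := betaInt_eq hα0 hγ0
  have hnorm_int : ∀ s ∈ Set.Ioo a b, ∫ u, ‖f (s, u)‖ ∂μ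
      ≤ M * B2 * ((b - s) ^ ((1 - γ) - 1) * (s - a) ^ ((α + γ) - 1)) := by
    intro s hs
    have e0 : ∫ u, ‖f (s, u)‖ ∂μ = ∫ u in Set.Ioo a s, ‖k s u‖ := by
      have e1 : (fun u => ‖f (s, u)‖) = (Set.Ioo a s).indicator (fun u => ‖k s u‖) := by
        funext u
        rw [show f (s, u) = (Set.Ioo a s).indicator (fun u => k s u) u from
          congrFun (hsec s) u, norm_indicator_eq_indicator_norm]
      rw [e1, MeasureTheory.integral_indicator measurableSet_Ioo, hμ,
        Measure.restrict_restrict measurableSet_Ioo,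
        Set.inter_eq_self_of_subset_left (hsub s hs)]
    rw [e0]
    have hle : ∫ u in Set.Ioo a s, ‖k s u‖
        ≤ ∫ u in Set.Ioo a s, (b - s) ^ (-γ) * M * ((s - u) ^ (α - 1) * (u - a) ^ (γ - 1)) := by
      refine MeasureTheory.integral_mono_of_nonneg
        (Filter.Eventually.of_forall fun u => norm_nonneg _)
        ((betaKer_integrableOn' hs.1 hα0 hγ0).const_mul _) ?_
      exact (MeasureTheory.ae_restrict_iff' measurableSet_Ioo).mpr
        (by filter_upwards with u hu; exact hbound s hs u hu)
    refine le_trans hle ?_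
    rw [MeasureTheory.integral_const_mul]
    have hval : ∫ u in Set.Ioo a s, (s - u) ^ (α - 1) * (u - a) ^ (γ - 1)
        = (s - a) ^ (α + γ - 1) * B2 := by
      rw [← MeasureTheory.integral_Ioc_eq_integral_Ioo, ← intervalIntegral.integral_of_le hs.1.le,
        affine_sub_one hs.1 α γ, hbeta2]
    rw [hval]
    have e3 : (1 - γ) - 1 = -γ := by ring
    have e4 : (α + γ) - 1 = α + γ - 1 := by ring
    rw [e3, e4]
    exact le_of_eq (by ring)
  have hprod : Integrable f (μ.prod μ) := by
    rw [MeasureTheory.integrable_prod_iff hfmeas]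
    constructor
    · refine ((MeasureTheory.ae_restrict_iff' measurableSet_Ioo).mpr ?_ :
        ∀ᵐ s ∂μ, Integrable (fun u => f (s, u)) μ)
      filter_upwards with s hs
      rw [hsec s, MeasureTheory.integrable_indicator_iff measurableSet_Ioo]
      rw [IntegrableOn, hμ, Measure.restrict_restrict measurableSet_Ioo,
        Set.inter_eq_self_of_subset_left (hsub s hs)]
      exact hker1 s hs
    · refine Integrable.mono'
        ((betaKer_integrableOn' hab (by linarith : (0:ℝ) < 1 - γ)
          (by linarith : (0:ℝ) < α + γ)).const_mul (M * B2))
        hfmeas.norm.integral_prod_right' ?_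
      refine (MeasureTheory.ae_restrict_iff' measurableSet_Ioo).mpr ?_
      filter_upwards with s hs
      rw [Real.norm_eq_abs, abs_of_nonneg (MeasureTheory.integral_nonneg fun u => norm_nonneg _)]
      exact hnorm_int s hs
  have hcong : ∀ s ∈ Set.Ioo a b, ∫ u, f (s, u) ∂μ
      = (b - s) ^ (-γ) * ∫ u in a..s, (s - u) ^ (α - 1) * F u := by
    intro s hs
    rw [hsec s, MeasureTheory.integral_indicator measurableSet_Ioo, hμ,
      Measure.restrict_restrict measurableSet_Ioo,
      Set.inter_eq_self_of_subset_left (hsub s hs),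
      intervalIntegral.integral_of_le hs.1.le, MeasureTheory.integral_Ioc_eq_integral_Ioo,
      hk]
    rw [MeasureTheory.integral_const_mul]
    congr 1
    refine MeasureTheory.setIntegral_congr_fun measurableSet_Ioo fun u hu => ?_
    rw [hFrep u hu.1 (le_trans hu.2.le hs.2.le)]
  have hint1 : Integrable (fun s => ∫ u, f (s, u) ∂μ) μ := hprod.integral_prod_left
  have hcong2 : ∀ u ∈ Set.Ioo a b, ∫ s, f (s, u) ∂μ
      = B1 * ((b - u) ^ (α - γ) * F u) := by
    intro u hu
    rw [hsec2 u hu.1, MeasureTheory.integral_indicator measurableSet_Ioi]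
    have hres : μ.restrict (Set.Ioi u) = volume.restrict (Set.Ioo u b) := by
      rw [hμ, Measure.restrict_restrict measurableSet_Ioi]
      congr 1
      ext x
      simp only [Set.mem_inter_iff, Set.mem_Ioi, Set.mem_Ioo]
      constructor
      · rintro ⟨h1, _, h3⟩; exact ⟨h1, h3⟩
      · rintro ⟨h1, h2⟩; exact ⟨h1, lt_trans hu.1 h1, h2⟩
    rw [hres]
    have e1 : ∀ s ∈ Set.Ioo u b, k s u
        = ((b - s) ^ ((1 - γ) - 1) * (s - u) ^ (α - 1)) * ((u - a) ^ (γ - 1) * Fc u) := by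
      intro s hs
      rw [hk, show (1 - γ) - 1 = -γ by ring]
      ring
    rw [MeasureTheory.setIntegral_congr_fun measurableSet_Ioo e1,
      MeasureTheory.integral_mul_const]
    have e2 : ∫ s in Set.Ioo u b, (b - s) ^ ((1 - γ) - 1) * (s - u) ^ (α - 1)
        = (b - u) ^ (α - γ) * B1 := by
      rw [← MeasureTheory.integral_Ioc_eq_integral_Ioo, ← intervalIntegral.integral_of_le hu.2.le,
        affine_sub_one hu.2 (1 - γ) α, betaInt_eq (by linarith : (0:ℝ) < 1 - γ) hα0,
        show 1 - γ + α - 1 = α - γ by ring, hB1]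
    rw [e2, hFrep u hu.1 hu.2.le]
    ring
  constructor
  · refine hint1.congr ?_
    refine (MeasureTheory.ae_restrict_iff' measurableSet_Ioo).mpr ?_
    filter_upwards with s hs
    exact hcong s hs
  · have swap : ∫ s, (∫ u, f (s, u) ∂μ) ∂μ = ∫ u, (∫ s, f (s, u) ∂μ) ∂μ :=
      MeasureTheory.integral_integral_swap (f := fun s u => f (s, u)) hprod
    have lhs_eq : ∫ s in Set.Ioo a b, (b - s) ^ (-γ) * ∫ u in a..s, (s - u) ^ (α - 1) * F u
        = ∫ s, (∫ u, f (s, u) ∂μ) ∂μ := by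
      refine MeasureTheory.integral_congr_ae ?_
      refine (MeasureTheory.ae_restrict_iff' measurableSet_Ioo).mpr ?_
      filter_upwards with s hs
      exact (hcong s hs).symm
    have rhs_eq : ∫ u, (∫ s, f (s, u) ∂μ) ∂μ
        = B1 * ∫ s in a..b, (b - s) ^ (α - γ) * F s := by
      have e5 : ∫ u, (∫ s, f (s, u) ∂μ) ∂μ = ∫ u in Set.Ioo a b, B1 * ((b - u) ^ (α - γ) * F u) := by
        refine MeasureTheory.integral_congr_ae ?_
        refine (MeasureTheory.ae_restrict_iff' measurableSet_Ioo).mpr ?_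
        filter_upwards with u hu
        exact hcong2 u hu
      rw [e5, MeasureTheory.integral_const_mul,
        intervalIntegral.integral_of_le hab.le, MeasureTheory.integral_Ioc_eq_integral_Ioo]
    rw [lhs_eq, swap, rhs_eq, hB1]

/-- **A solution of the integral equation satisfies the boundary condition.**
Fix `a < b`, `α ∈ (0,1)`, `β ∈ [0,1]`, `γ = α + β(1−α)`.  Let `c, d, e ∈ ℝ`
with `d ≠ 0` and `1 + c/d ≠ 0`, let `z ∈ C_{1−γ}[a,b]`, suppose
`F(t) = f(t,z(t))` belongs to `C_{1−γ}[a,b]` and that `z` satisfies the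
integral equation on `(a,b]`.  Then the boundary condition
`c·lim_{t→a⁺}(I^{1−γ}_a z)(t) + d·lim_{t→b⁻}(I^{1−γ}_a z)(t) = e` holds
(in particular both one-sided limits exist). -/
theorem integral_equation_implies_boundary_condition (a b α β γ : ℝ) (hab : a < b)
    (hα0 : 0 < α) (hα1 : α < 1) (hβ0 : 0 ≤ β) (hβ1 : β ≤ 1)
    (hγ : γ = α + β * (1 - α))
    (c d e : ℝ) (hd : d ≠ 0) (hcd : 1 + c / d ≠ 0)
    (f : ℝ → ℝ → ℝ) (z : ℝ → ℝ)
    (hz : memCw a b (1 - γ) z)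
    (hF : memCw a b (1 - γ) (fun t => f t (z t)))
    (heq : ∀ t ∈ Set.Ioc a b,
      z t = (t - a) ^ (γ - 1) / Real.Gamma γ * (e / (d * (1 + c / d))) -
          (1 / (1 + c / d)) * ((t - a) ^ (γ - 1) / Real.Gamma γ) *
            ((1 / Real.Gamma (1 - γ + α)) *
              ∫ s in a..b, (b - s) ^ (α - γ) * f s (z s)) +
          (1 / Real.Gamma α) * ∫ s in a..t, (t - s) ^ (α - 1) * f s (z s)) :
    ∃ La Lb : ℝ,
      Filter.Tendsto (rlInt a (1 - γ) z) (nhdsWithin a (Set.Ioi a)) (nhds La) ∧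
      Filter.Tendsto (rlInt a (1 - γ) z) (nhdsWithin b (Set.Iio b)) (nhds Lb) ∧
      c * La + d * Lb = e := by
  obtain ⟨Z, hZc, hZ⟩ := hz
  obtain ⟨Fc, hFcc, hFcr⟩ := hF
  have hβα : 0 ≤ β * (1 - α) := mul_nonneg hβ0 (by linarith)
  have hβα1 : β * (1 - α) ≤ 1 - α := by nlinarith
  have hγ0 : 0 < γ := by linarith
  have hγle1 : γ ≤ 1 := by linarith
  have hαγ : α ≤ γ := by linarith
  have hΓγ : (0:ℝ) < Real.Gamma γ := Real.Gamma_pos_of_pos hγ0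
  have hΓα : (0:ℝ) < Real.Gamma α := Real.Gamma_pos_of_pos hα0
  have hΓγα : (0:ℝ) < Real.Gamma (1 - γ + α) := Real.Gamma_pos_of_pos (by linarith)
  set K := (1 / Real.Gamma (1 - γ + α)) * ∫ s in a..b, (b - s) ^ (α - γ) * f s (z s) with hK
  set A := (e / (d * (1 + c / d)) - (1 / (1 + c / d)) * K) / Real.Gamma γ with hA
  have heq' : ∀ t ∈ Set.Ioc a b,
      z t = (t - a) ^ (γ - 1) * A
        + (1 / Real.Gamma α) * ∫ s in a..t, (t - s) ^ (α - 1) * f s (z s) := by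
    intro t ht
    rw [heq t ht, hA]
    ring
  -- filter facts
  have hfa : 𝓝[Set.Ioc a b] a = 𝓝[>] a := nhdsWithin_Ioc_eq_nhdsGT hab
  have hle_a : 𝓝[>] a ≤ 𝓝[Set.Icc a b] a := by
    rw [← hfa]; exact nhdsWithin_mono a Set.Ioc_subset_Icc_self
  have hIoc_a : Set.Ioc a b ∈ 𝓝[>] a := by rw [← hfa]; exact self_mem_nhdsWithin
  have hle_b : 𝓝[<] b ≤ 𝓝[Set.Icc a b] b := by
    rw [← nhdsWithin_Ico_eq_nhdsLT hab]
    exact nhdsWithin_mono b Set.Ico_subset_Icc_self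
  have hIoc_b : Set.Ioc a b ∈ 𝓝[<] b := by
    rw [← nhdsWithin_Ico_eq_nhdsLT hab]
    exact mem_nhdsWithin.mpr ⟨Set.Ioi a, isOpen_Ioi, hab, fun x hx => ⟨hx.1, hx.2.2.le⟩⟩
  -- tendsto of (t-a)^α to 0
  have hrpow0 : Filter.Tendsto (fun t : ℝ => (t - a) ^ α) (𝓝[>] a) (𝓝 0) := by
    have hc : Continuous fun t : ℝ => (t - a) ^ α :=
      (Real.continuous_rpow_const hα0.le).comp (continuous_id.sub continuous_const)
    have := hc.tendsto a
    rw [sub_self, Real.zero_rpow hα0.ne'] at this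
    exact this.mono_left nhdsWithin_le_nhds
  -- the algebra at the end
  have halg : ∀ L1 L2 : ℝ, L1 = A * Real.Gamma γ → L2 = A * Real.Gamma γ + K →
      c * L1 + d * L2 = e := by
    intro L1 L2 h1 h2
    have hAΓ : A * Real.Gamma γ = e / (d * (1 + c / d)) - (1 / (1 + c / d)) * K := by
      rw [hA]; field_simp
    have hcd' : c + d ≠ 0 := by
      have h0 : 1 + c / d = (c + d) / d := by field_simp; ring
      rw [h0, div_ne_zero_iff] at hcd
      exact hcd.1
    rw [h1, h2, hAΓ]
    field_simp
    rw [div_eq_mul_inv, div_eq_mul_inv]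
    have hx : (c + d) * (c + d)⁻¹ = 1 := mul_inv_cancel₀ hcd'
    linear_combination (e - d * K) * hx
  by_cases hγ1 : γ = 1
  · -- degenerate case : rlInt is the identity
    have hrl : rlInt a (1 - γ) z = z := by
      funext t; rw [rlInt, if_pos (by rw [hγ1]; ring)]
    -- J1 limit at a
    have hJ1 := tendsto_param hab hα0 hγ0 hFcc (Set.left_mem_Icc.mpr hab.le)
    have hza : Filter.Tendsto z (𝓝[>] a) (𝓝 A) := by
      have h2 : Filter.Tendsto
          (fun t => A + (1 / Real.Gamma α) * ((t - a) ^ α *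
            ∫ u in (0:ℝ)..1, (1 - u) ^ (α - 1) * u ^ (γ - 1) * Fc (a + (t - a) * u)))
          (𝓝[>] a) (𝓝 (A + (1 / Real.Gamma α) * (0 *
            ∫ u in (0:ℝ)..1, (1 - u) ^ (α - 1) * u ^ (γ - 1) * Fc (a + (a - a) * u)))) :=
        Filter.Tendsto.const_add A
          ((Filter.Tendsto.mul hrpow0 (hJ1.mono_left hle_a)).const_mul _)
      rw [zero_mul, mul_zero, add_zero] at h2
      refine h2.congr' ?_
      filter_upwards [hIoc_a] with t ht
      have hta : 0 < t - a := by linarith [ht.1]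
      rw [heq' t ht, rep_int hFcr ht α]
      rw [hγ1]
      rw [show α + 1 - 1 = α by ring, show (1:ℝ) - 1 = 0 by ring, Real.rpow_zero, one_mul]
    have hzb : Filter.Tendsto z (𝓝[<] b) (𝓝 (Z b)) := by
      have hZb : Filter.Tendsto Z (𝓝[<] b) (𝓝 (Z b)) :=
        (hZc.continuousWithinAt (Set.right_mem_Icc.mpr hab.le)).mono_left hle_b
      refine hZb.congr' ?_
      filter_upwards [hIoc_b] with t ht
      rw [hZ t ht, hγ1, show (1:ℝ) - 1 = 0 by ring, Real.rpow_zero, one_mul]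
    refine ⟨A, Z b, by rw [hrl]; exact hza, by rw [hrl]; exact hzb, ?_⟩
    apply halg
    · rw [hγ1, Real.Gamma_one, mul_one]
    · -- Z b = A * Γγ + K
      have hZbv : Z b = z b := by
        rw [hZ b ⟨hab, le_refl b⟩, hγ1, show (1:ℝ) - 1 = 0 by ring, Real.rpow_zero, one_mul]
      rw [hZbv, heq' b ⟨hab, le_refl b⟩, hK, hγ1]
      norm_num [Real.Gamma_one]
  · -- main case : γ < 1
    have hγlt1 : γ < 1 := lt_of_le_of_ne hγle1 hγ1
    have h1γ : (0:ℝ) < 1 - γ := by linarith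
    have hΓ1γ : (0:ℝ) < Real.Gamma (1 - γ) := Real.Gamma_pos_of_pos h1γ
    have h1γne : (1:ℝ) - γ ≠ 0 := h1γ.ne'
    -- representation of rlInt on Ioc a b
    have hrl : ∀ t ∈ Set.Ioc a b, rlInt a (1 - γ) z t
        = (1 / Real.Gamma (1 - γ)) *
            ∫ u in (0:ℝ)..1, (1 - u) ^ (1 - γ - 1) * u ^ (γ - 1) * Z (a + (t - a) * u) := by
      intro t ht
      rw [rlInt, if_neg h1γne, rep_int hZ ht (1 - γ),
        show 1 - γ + γ - 1 = 0 by ring, Real.rpow_zero, one_mul]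
    have hJ2a := tendsto_param hab h1γ hγ0 hZc (Set.left_mem_Icc.mpr hab.le)
    have hJ2b := tendsto_param hab h1γ hγ0 hZc (Set.right_mem_Icc.mpr hab.le)
    set J2a := ∫ u in (0:ℝ)..1, (1 - u) ^ (1 - γ - 1) * u ^ (γ - 1) * Z (a + (a - a) * u) with hJ2adef
    set J2b := ∫ u in (0:ℝ)..1, (1 - u) ^ (1 - γ - 1) * u ^ (γ - 1) * Z (a + (b - a) * u) with hJ2bdef
    refine ⟨(1 / Real.Gamma (1 - γ)) * J2a, (1 / Real.Gamma (1 - γ)) * J2b, ?_, ?_, ?_⟩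
    · refine (((hJ2a.mono_left hle_a).const_mul (1 / Real.Gamma (1 - γ)))).congr' ?_
      filter_upwards [hIoc_a] with t ht
      exact (hrl t ht).symm
    · refine (((hJ2b.mono_left hle_b).const_mul (1 / Real.Gamma (1 - γ)))).congr' ?_
      filter_upwards [hIoc_b] with t ht
      exact (hrl t ht).symm
    · -- values
      -- J2a = Γ(1-γ)Γγ * Z a
      have hJ2aval : J2a = Real.Gamma (1 - γ) * Real.Gamma γ * Z a := by
        rw [hJ2adef]
        have : ∀ u : ℝ, (1 - u) ^ (1 - γ - 1) * u ^ (γ - 1) * Z (a + (a - a) * u)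
            = (1 - u) ^ (1 - γ - 1) * u ^ (γ - 1) * Z a := by
          intro u; rw [sub_self, zero_mul, add_zero]
        simp only [this]
        rw [intervalIntegral.integral_mul_const, betaInt_eq h1γ hγ0,
          show 1 - γ + γ = 1 by ring, Real.Gamma_one, div_one]
      -- Z a = A
      have hZaA : Z a = A := by
        have hT1 : Filter.Tendsto (fun t => (t - a) ^ (1 - γ) * z t) (𝓝[>] a) (𝓝 (Z a)) := by
          refine (((hZc.continuousWithinAt (Set.left_mem_Icc.mpr hab.le)).mono_left
            hle_a)).congr' ?_
          filter_upwards [hIoc_a] with t ht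
          exact hZ t ht
        have hJ1 := tendsto_param hab hα0 hγ0 hFcc (Set.left_mem_Icc.mpr hab.le)
        have hT2 : Filter.Tendsto (fun t => (t - a) ^ (1 - γ) * z t) (𝓝[>] a) (𝓝 A) := by
          have h2 : Filter.Tendsto
              (fun t => A + (1 / Real.Gamma α) * ((t - a) ^ α *
                ∫ u in (0:ℝ)..1, (1 - u) ^ (α - 1) * u ^ (γ - 1) * Fc (a + (t - a) * u)))
              (𝓝[>] a) (𝓝 (A + (1 / Real.Gamma α) * (0 *
                ∫ u in (0:ℝ)..1, (1 - u) ^ (α - 1) * u ^ (γ - 1) * Fc (a + (a - a) * u)))) :=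
            Filter.Tendsto.const_add A
              ((Filter.Tendsto.mul hrpow0 (hJ1.mono_left hle_a)).const_mul _)
          rw [zero_mul, mul_zero, add_zero] at h2
          refine h2.congr' ?_
          filter_upwards [hIoc_a] with t ht
          have hta : 0 < t - a := by linarith [ht.1]
          rw [heq' t ht, rep_int hFcr ht α, mul_add]
          rw [← mul_assoc ((t - a) ^ (1 - γ)), ← Real.rpow_add hta,
            show 1 - γ + (γ - 1) = 0 by ring, Real.rpow_zero, one_mul]
          congr 1
          rw [show (1 : ℝ) / Real.Gamma α * ((t - a) ^ (α + γ - 1) *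
              ∫ u in (0:ℝ)..1, (1 - u) ^ (α - 1) * u ^ (γ - 1) * Fc (a + (t - a) * u))
            = (t - a) ^ (α + γ - 1) * ((1 / Real.Gamma α) *
              ∫ u in (0:ℝ)..1, (1 - u) ^ (α - 1) * u ^ (γ - 1) * Fc (a + (t - a) * u)) from by ring]
          rw [← mul_assoc ((t - a) ^ (1 - γ)), ← Real.rpow_add hta,
            show 1 - γ + (α + γ - 1) = α by ring]
          ring
        exact tendsto_nhds_unique hT1 hT2
      -- J2b value via Fubini
      have hfub := fubini_step_s9 hab hα0 hγ0 hγlt1 hFcc hFcr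
      have hJ2bval : J2b = A * (Real.Gamma (1 - γ) * Real.Gamma γ) + Real.Gamma (1 - γ) * K := by
        have hrep := rep_int hZ (⟨hab, le_refl b⟩ : b ∈ Set.Ioc a b) (1 - γ)
        rw [show 1 - γ + γ - 1 = 0 by ring, Real.rpow_zero, one_mul] at hrep
        rw [← hJ2bdef] at hrep
        rw [← hrep]
        have I2 : IntegrableOn (fun s => (1 / Real.Gamma α) * ((b - s) ^ (-γ) *
            ∫ u in a..s, (s - u) ^ (α - 1) * f u (z u))) (Set.Ioo a b) := hfub.1.const_mul _
        have I1 : IntegrableOn (fun s => ((b - s) ^ (-γ) * (s - a) ^ (γ - 1)) * A)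
            (Set.Ioo a b) := by
          have h := (betaKer_integrableOn' hab h1γ hγ0).mul_const A
          rwa [show (1:ℝ) - γ - 1 = -γ by ring] at h
        have hsplit : ∫ s in a..b, (b - s) ^ (1 - γ - 1) * z s
            = (∫ s in Set.Ioo a b, ((b - s) ^ (-γ) * (s - a) ^ (γ - 1)) * A)
              + ∫ s in Set.Ioo a b, (1 / Real.Gamma α) * ((b - s) ^ (-γ) *
                  ∫ u in a..s, (s - u) ^ (α - 1) * f u (z u)) := by
          rw [intervalIntegral.integral_of_le hab.le, MeasureTheory.integral_Ioc_eq_integral_Ioo,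
            ← MeasureTheory.integral_add I1 I2]
          refine MeasureTheory.setIntegral_congr_fun measurableSet_Ioo fun s hs => ?_
          rw [show (1:ℝ) - γ - 1 = -γ by ring, heq' s ⟨hs.1, hs.2.le⟩]
          ring
        rw [hsplit]
        have hV1 : ∫ s in Set.Ioo a b, ((b - s) ^ (-γ) * (s - a) ^ (γ - 1)) * A
            = A * (Real.Gamma (1 - γ) * Real.Gamma γ) := by
          rw [← MeasureTheory.integral_Ioc_eq_integral_Ioo,
            ← intervalIntegral.integral_of_le hab.le, intervalIntegral.integral_mul_const,
            show -γ = 1 - γ - 1 by ring, affine_sub_one hab (1 - γ) γ,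
            betaInt_eq h1γ hγ0, show 1 - γ + γ - 1 = 0 by ring, Real.rpow_zero, one_mul,
            show 1 - γ + γ = 1 by ring, Real.Gamma_one, div_one]
          ring
        have hV2 : ∫ s in Set.Ioo a b, (1 / Real.Gamma α) * ((b - s) ^ (-γ) *
              ∫ u in a..s, (s - u) ^ (α - 1) * f u (z u))
            = Real.Gamma (1 - γ) * K := by
          rw [MeasureTheory.integral_const_mul, hfub.2, hK]
          field_simp
        rw [hV1, hV2]
      rw [hJ2aval, hZaA, hJ2bval]
      apply halg
      · field_simp
      · field_simp
end

section
/- Fix real numbers a < b, α ∈ (0,1), β ∈ [0,1], and set γ = α + β(1−α). Let f : (a,b]×ℝ → ℝ be continuous, such that t ↦ f(t, z(t)) belongs to C_{1−γ}[a,b] for every z ∈ C_{1−γ}[a,b], and let c, d, e ∈ ℝ with d ≠ 0 and 1 + c/d ≠ 0. Assume (H4): there exists L > 0 such that |f(t, u) − f(t, v)| ≤ L|u − v| for all t ∈ (a,b] and all u, v ∈ ℝ; assume (H5): W := [ |1/(1+c/d)|/Γ(α+1) + Γ(γ)/Γ(γ+α) ]·(b−a)^α·L < 1; and assume the contraction condition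 |1/(1+c/d)|·(b−a)^α·L/Γ(α+1) < 1. Then there exists z ∈ C_{1−γ}[a,b] satisfying for all t ∈ (a,b] the integral equation z(t) = ((t−a)^{γ−1}/Γ(γ))·(e/(d(1+c/d))) − (1/(1+c/d))·((t−a)^{γ−1}/Γ(γ))·(1/Γ(1−γ+α)) ∫_a^b (b−s)^{α−γ} f(s, z(s)) ds + (1/Γ(α)) ∫_a^t (t−s)^{α−1} f(s, z(s)) ds; that is, the Hilfer boundary value problem D^{α,β}_a z(t) = f(t, z(t)) with c·lim_{t→a^+}(I^{1−γ}_a z)(t) + d·lim_{t→b^−}(I^{1−γ}_a z)(t) = e has at least one solution. -/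
open MeasureTheory Set intervalIntegral

lemma kernel_intervalIntegrable {a t p q : ℝ} (h : a < t) (hp : -1 < p) (hq : -1 < q) :
    IntervalIntegrable (fun s : ℝ => (t - s) ^ p * (s - a) ^ q) volume a t := by
  set m : ℝ := (a + t) / 2 with hm
  have ham : a < m := by simp only [hm]; linarith
  have hmt : m < t := by simp only [hm]; linarith
  have h1 : IntervalIntegrable (fun s : ℝ => (t - s) ^ p * (s - a) ^ q) volume a m := by
    have base := (intervalIntegrable_rpow' hq (a := 0) (b := m - a)).comp_sub_right a
    rw [show m - a + a = m by ring, zero_add] at base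
    refine (base.mul_continuousOn (g := fun s => (t - s) ^ p) ?_).congr ?_
    · apply ContinuousOn.rpow_const (by fun_prop)
      intro x hx
      rw [Set.uIcc_of_le ham.le] at hx
      left; intro hc; linarith [hx.2]
    · intro x _; exact mul_comm _ _
  have h2 : IntervalIntegrable (fun s : ℝ => (t - s) ^ p * (s - a) ^ q) volume m t := by
    have base := ((intervalIntegrable_rpow' hp (a := 0) (b := t - m)).comp_sub_left t).symm
    rw [show t - (t - m) = m by ring, sub_zero] at base
    apply base.mul_continuousOn (g := fun s => (s - a) ^ q) ?_
    apply ContinuousOn.rpow_const (by fun_prop)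
    intro x hx
    rw [Set.uIcc_of_le hmt.le] at hx
    left; intro hc; linarith [hx.1]
  exact h1.trans h2

lemma realBeta_s12 {p q : ℝ} (hp : 0 < p) (hq : 0 < q) :
    ∫ u in (0:ℝ)..1, u ^ (p - 1) * (1 - u) ^ (q - 1)
      = Real.Gamma p * Real.Gamma q / Real.Gamma (p + q) := by
  have key : Complex.betaIntegral p q = ((∫ u in (0:ℝ)..1, u ^ (p-1) * (1-u) ^ (q-1) : ℝ) : ℂ) := by
    rw [Complex.betaIntegral, ← intervalIntegral.integral_ofReal]
    apply intervalIntegral.integral_congr_ae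
    filter_upwards with x hx
    rw [Set.uIoc_of_le (by norm_num : (0:ℝ) ≤ 1)] at hx
    rw [Complex.ofReal_mul, Complex.ofReal_cpow hx.1.le,
      Complex.ofReal_cpow (by linarith [hx.2] : (0:ℝ) ≤ 1 - x)]
    push_cast
    ring
  have hG := Complex.Gamma_mul_Gamma_eq_betaIntegral
    (s := (p:ℂ)) (t := (q:ℂ)) (by simpa using hp) (by simpa using hq)
  rw [key] at hG
  rw [← Complex.ofReal_add, Complex.Gamma_ofReal, Complex.Gamma_ofReal, Complex.Gamma_ofReal] at hG
  have hG' : Real.Gamma p * Real.Gamma q = Real.Gamma (p+q) * ∫ u in (0:ℝ)..1, u^(p-1)*(1-u)^(q-1) := by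
    exact_mod_cast hG
  have hne : Real.Gamma (p+q) ≠ 0 := (Real.Gamma_pos_of_pos (by linarith)).ne'
  field_simp [hG']
  rw [hG']; ring

lemma kernel_subst (φ : ℝ → ℝ) {a t : ℝ} (h : a < t) (p q : ℝ) :
    ∫ s in a..t, (t - s) ^ p * (s - a) ^ q * φ s
      = (t - a) ^ (p + q + 1) *
        ∫ u in (0:ℝ)..1, (1 - u) ^ p * u ^ q * φ (a + (t - a) * u) := by
  have hta : 0 < t - a := by linarith
  have comp := intervalIntegral.integral_comp_mul_add
    (f := fun s => (t - s) ^ p * (s - a) ^ q * φ s) (a := (0:ℝ)) (b := 1)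
    (c := t - a) hta.ne' a
  simp only [mul_zero, zero_add, mul_one] at comp
  have congr1 : ∫ u in (0:ℝ)..1, (t - ((t-a) * u + a)) ^ p * (((t-a) * u + a) - a) ^ q * φ ((t-a)*u + a)
      = ∫ u in (0:ℝ)..1, (t - a) ^ (p + q) * ((1 - u) ^ p * u ^ q * φ (a + (t - a) * u)) := by
    apply intervalIntegral.integral_congr_ae
    filter_upwards with u hu
    rw [Set.uIoc_of_le (by norm_num : (0:ℝ) ≤ 1)] at hu
    have h1 : t - ((t-a) * u + a) = (t - a) * (1 - u) := by ring
    have h2 : ((t-a) * u + a) - a = (t - a) * u := by ring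
    rw [h1, h2, Real.mul_rpow hta.le (by linarith [hu.2]), Real.mul_rpow hta.le hu.1.le,
      Real.rpow_add hta, add_comm a ((t-a)*u)]
    ring
  rw [congr1, intervalIntegral.integral_const_mul] at comp
  have key : ∫ s in a..(t - a + a), (t - s) ^ p * (s - a) ^ q * φ s
      = (t-a) * ((t - a) ^ (p + q) * ∫ u in (0:ℝ)..1, (1 - u) ^ p * u ^ q * φ (a + (t - a) * u)) := by
    rw [eq_comm, mul_comm] at comp
    rw [smul_eq_mul, inv_mul_eq_iff_eq_mul₀ hta.ne'] at comp
    rw [comp]; ring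
  rw [show t - a + a = t by ring] at key
  rw [key, show (t-a)^(p+q+1) = (t-a)^(p+q) * (t-a) by rw [Real.rpow_add hta, Real.rpow_one]]
  ring

/-- value of the weighted kernel integral -/
lemma kernel_integral_value {a t p q : ℝ} (h : a < t) (hp : -1 < p) (hq : -1 < q) :
    ∫ s in a..t, (t - s) ^ p * (s - a) ^ q
      = (t - a) ^ (p + q + 1) * (Real.Gamma (q+1) * Real.Gamma (p+1) / Real.Gamma (q+1+(p+1))) := by
  have h1 := kernel_subst (fun _ => (1:ℝ)) h p q
  simp only [mul_one] at h1
  rw [h1]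
  congr 1
  rw [← realBeta_s12 (by linarith : (0:ℝ) < q+1) (by linarith : (0:ℝ) < p+1)]
  apply intervalIntegral.integral_congr
  intro u _
  simp only [add_sub_cancel_right]
  ring



/-- **Existence for the Hilfer BVP (Theorem 3.4, via Krasnosel'skii's fixed
point theorem).**  Fix `a < b`, `α ∈ (0,1)`, `β ∈ [0,1]`, `γ = α + β(1−α)`.
Let `f : (a,b]×ℝ → ℝ` be continuous, mapping `C_{1−γ}[a,b]` into
`C_{1−γ}[a,b]` via `z ↦ f(·,z(·))`, and let `c, d, e ∈ ℝ` with `d ≠ 0`,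
`1 + c/d ≠ 0`.  Assume (H4): `|f(t,u) − f(t,v)| ≤ L|u−v|` with `L > 0`;
(H5): `W = [|1/(1+c/d)|/Γ(α+1) + Γ(γ)/Γ(γ+α)](b−a)^α L < 1`; and the
contraction condition `|1/(1+c/d)|(b−a)^α L/Γ(α+1) < 1`.  Then the equivalent
integral equation of the BVP has at least one solution `z ∈ C_{1−γ}[a,b]`. -/
theorem hilfer_bvp_existence_krasnoselskii (a b α β γ : ℝ) (hab : a < b)
    (hα0 : 0 < α) (hα1 : α < 1) (hβ0 : 0 ≤ β) (hβ1 : β ≤ 1)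
    (hγ : γ = α + β * (1 - α))
    (f : ℝ → ℝ → ℝ)
    (hfc : ContinuousOn (fun p : ℝ × ℝ => f p.1 p.2) (Set.Ioc a b ×ˢ Set.univ))
    (hf : ∀ z : ℝ → ℝ, memCw a b (1 - γ) z → memCw a b (1 - γ) (fun t => f t (z t)))
    (c d e : ℝ) (hd : d ≠ 0) (hcd : 1 + c / d ≠ 0)
    (L : ℝ) (hL : 0 < L)
    (hH4 : ∀ t ∈ Set.Ioc a b, ∀ u v : ℝ, |f t u - f t v| ≤ L * |u - v|)
    (hH5 : (|1 / (1 + c / d)| / Real.Gamma (α + 1) +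
        Real.Gamma γ / Real.Gamma (γ + α)) * (b - a) ^ α * L < 1)
    (hcontr : |1 / (1 + c / d)| * (b - a) ^ α * L / Real.Gamma (α + 1) < 1) :
    ∃ z : ℝ → ℝ, memCw a b (1 - γ) z ∧
      ∀ t ∈ Set.Ioc a b,
        z t = (t - a) ^ (γ - 1) / Real.Gamma γ * (e / (d * (1 + c / d))) -
            (1 / (1 + c / d)) * ((t - a) ^ (γ - 1) / Real.Gamma γ) *
              ((1 / Real.Gamma (1 - γ + α)) *
                ∫ s in a..b, (b - s) ^ (α - γ) * f s (z s)) +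
            (1 / Real.Gamma α) * ∫ s in a..t, (t - s) ^ (α - 1) * f s (z s) := by
  -- basic facts about γ
  have hγα : α ≤ γ := by nlinarith
  have hγ1 : γ ≤ 1 := by nlinarith
  have hγ0 : 0 < γ := lt_of_lt_of_le hα0 hγα
  have hΓγ : 0 < Real.Gamma γ := Real.Gamma_pos_of_pos hγ0
  have hΓα : 0 < Real.Gamma α := Real.Gamma_pos_of_pos hα0
  have hΓγα : 0 < Real.Gamma (γ + α) := Real.Gamma_pos_of_pos (by linarith)
  have hΓα1 : 0 < Real.Gamma (α + 1) := Real.Gamma_pos_of_pos (by linarith)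
  have hΓagc : 0 < Real.Gamma (1 - γ + α) := Real.Gamma_pos_of_pos (by linarith)
  -- the space
  haveI : Nonempty (Set.Icc a b) := ⟨⟨a, le_refl a, hab.le⟩⟩
  set X := C(Set.Icc a b, ℝ)
  -- the candidate solutions
  set ze : X → ℝ → ℝ := fun G t => (t - a) ^ (γ - 1) * Set.IccExtend hab.le G t with hze
  have hcancel : ∀ t : ℝ, a < t → (t - a) ^ (1 - γ) * (t - a) ^ (γ - 1) = 1 := by
    intro t ht
    rw [← Real.rpow_add (by linarith), show (1-γ) + (γ-1) = 0 by ring, Real.rpow_zero]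
  have hcancel' : ∀ t : ℝ, a < t → (t - a) ^ (γ - 1) * (t - a) ^ (1 - γ) = 1 := by
    intro t ht
    rw [← Real.rpow_add (by linarith), show (γ-1) + (1-γ) = 0 by ring, Real.rpow_zero]
  have hmem : ∀ G : X, memCw a b (1 - γ) (ze G) := by
    intro G
    refine ⟨Set.IccExtend hab.le G, (G.continuous.comp continuous_projIcc).continuousOn, ?_⟩
    intro t ht
    simp only [hze]
    rw [← mul_assoc, hcancel t ht.1, one_mul]
  -- choose globally continuous bounded representatives of the weighted composition
  have hHex : ∀ G : X, ∃ H : ℝ → ℝ, Continuous H ∧ (∃ M : ℝ, 0 ≤ M ∧ ∀ s : ℝ, |H s| ≤ M) ∧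
      (∀ s : ℝ, H s = H (max a (min b s))) ∧
      ∀ s ∈ Set.Ioc a b, f s (ze G s) = (s - a) ^ (γ - 1) * H s := by
    intro G
    obtain ⟨H0, hH0c, hH0eq⟩ := hf (ze G) (hmem G)
    have hprojmem : ∀ s : ℝ, (Set.projIcc a b hab.le s : ℝ) ∈ Set.Icc a b :=
      fun s => Subtype.coe_prop _
    refine ⟨fun s => H0 (Set.projIcc a b hab.le s), ?_, ?_, ?_, ?_⟩
    · exact hH0c.comp_continuous (continuous_subtype_val.comp continuous_projIcc) hprojmem
    · obtain ⟨M, hM⟩ := isCompact_Icc.exists_bound_of_continuousOn hH0c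
      refine ⟨max M 0, le_max_right _ _, fun s => ?_⟩
      exact le_trans (hM _ (hprojmem s)) (le_max_left _ _)
    · intro s
      beta_reduce
      have h1 : Set.projIcc a b hab.le (max a (min b s)) = Set.projIcc a b hab.le s := by
        rw [← Set.coe_projIcc a b hab.le s]
        exact Set.projIcc_val hab.le _
      rw [h1]
    · intro s hs
      have hsIcc : s ∈ Set.Icc a b := ⟨hs.1.le, hs.2⟩
      beta_reduce
      rw [Set.projIcc_of_mem hab.le hsIcc]
      have h2 : H0 s = (s - a) ^ (1 - γ) * f s (ze G s) := hH0eq s hs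
      show f s (ze G s) = (s - a) ^ (γ - 1) * H0 s
      rw [h2, ← mul_assoc, hcancel' s hs.1, one_mul]
  choose Hc hHc hHbd hHproj hHeq using hHex
  choose M hM0 hMb using hHbd
  -- pointwise Lipschitz estimates
  have hΔF : ∀ G1 G2 : X, ∀ s ∈ Set.Ioc a b,
      |f s (ze G1 s) - f s (ze G2 s)| ≤ L * dist G1 G2 * (s - a) ^ (γ - 1) := by
    intro G1 G2 s hs
    have hsIcc : s ∈ Set.Icc a b := ⟨hs.1.le, hs.2⟩
    have h1 := hH4 s hs (ze G1 s) (ze G2 s)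
    have h2 : ze G1 s - ze G2 s = (s - a) ^ (γ - 1) *
        (G1 ⟨s, hsIcc⟩ - G2 ⟨s, hsIcc⟩) := by
      simp only [hze, Set.IccExtend_of_mem hab.le _ hsIcc]; ring
    have h3 : |ze G1 s - ze G2 s| ≤ (s - a) ^ (γ - 1) * dist G1 G2 := by
      rw [h2, abs_mul, abs_of_nonneg (Real.rpow_nonneg (by linarith [hs.1]) _)]
      apply mul_le_mul_of_nonneg_left _ (Real.rpow_nonneg (by linarith [hs.1]) _)
      rw [← Real.dist_eq]
      exact ContinuousMap.dist_apply_le_dist _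
    calc |f s (ze G1 s) - f s (ze G2 s)| ≤ L * |ze G1 s - ze G2 s| := h1
      _ ≤ L * ((s - a) ^ (γ - 1) * dist G1 G2) :=
          mul_le_mul_of_nonneg_left h3 hL.le
      _ = L * dist G1 G2 * (s - a) ^ (γ - 1) := by ring
  have hΔHIoc : ∀ G1 G2 : X, ∀ s ∈ Set.Ioc a b,
      |Hc G1 s - Hc G2 s| ≤ L * dist G1 G2 := by
    intro G1 G2 s hs
    have hsa : 0 < s - a := by linarith [hs.1]
    have e1 : Hc G1 s - Hc G2 s = (s - a) ^ (1 - γ) *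
        (f s (ze G1 s) - f s (ze G2 s)) := by
      have k1 : (s - a) ^ (1 - γ) * f s (ze G1 s) = Hc G1 s := by
        rw [hHeq G1 s hs, ← mul_assoc, hcancel s hs.1, one_mul]
      have k2 : (s - a) ^ (1 - γ) * f s (ze G2 s) = Hc G2 s := by
        rw [hHeq G2 s hs, ← mul_assoc, hcancel s hs.1, one_mul]
      rw [← k1, ← k2]; ring
    rw [e1, abs_mul, abs_of_nonneg (Real.rpow_nonneg hsa.le _)]
    calc (s-a) ^ (1-γ) * |f s (ze G1 s) - f s (ze G2 s)|
        ≤ (s-a) ^ (1-γ) * (L * dist G1 G2 * (s - a) ^ (γ - 1)) :=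
          mul_le_mul_of_nonneg_left (hΔF G1 G2 s hs) (Real.rpow_nonneg hsa.le _)
      _ = (s-a) ^ (1-γ) * (s - a) ^ (γ - 1) * (L * dist G1 G2) := by ring
      _ = L * dist G1 G2 := by rw [hcancel s hs.1, one_mul]
  have hΔH : ∀ G1 G2 : X, ∀ s : ℝ, |Hc G1 s - Hc G2 s| ≤ L * dist G1 G2 := by
    intro G1 G2 s
    have hΔHa : |Hc G1 a - Hc G2 a| ≤ L * dist G1 G2 := by
      have hne : (nhdsWithin a (Set.Ioc a b)).NeBot := by
        rw [← mem_closure_iff_nhdsWithin_neBot, closure_Ioc hab.ne]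
        exact ⟨le_refl a, hab.le⟩
      exact le_of_tendsto ((((hHc G1).sub (hHc G2)).abs.tendsto a).mono_left nhdsWithin_le_nhds)
        (eventually_mem_nhdsWithin.mono (fun u hu => hΔHIoc G1 G2 u hu))
    rw [hHproj G1 s, hHproj G2 s]
    set x := max a (min b s) with hx
    have hxIcc : x ∈ Set.Icc a b := ⟨le_max_left _ _, max_le hab.le (min_le_left _ _)⟩
    rcases eq_or_lt_of_le hxIcc.1 with h | h
    · rw [← h]; exact hΔHa
    · exact hΔHIoc G1 G2 x ⟨h, hxIcc.2⟩
  -- the beta kernel on (0,1)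
  set kk : ℝ → ℝ := fun u => (1 - u) ^ (α - 1) * u ^ (γ - 1) with hkk
  have hkk_meas : Measurable kk := by fun_prop
  have hkk_int : IntegrableOn kk (Set.Ioc (0:ℝ) 1) volume := by
    rw [← intervalIntegrable_iff_integrableOn_Ioc_of_le (zero_le_one)]
    have := kernel_intervalIntegrable (a := 0) (t := 1) zero_lt_one
      (by linarith : (-1:ℝ) < α - 1) (by linarith : (-1:ℝ) < γ - 1)
    apply this.congr
    intro u _; simp [hkk]
  have hkk_nonneg : ∀ u ∈ Set.Ioc (0:ℝ) 1, 0 ≤ kk u := by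
    intro u hu
    exact mul_nonneg (Real.rpow_nonneg (by linarith [hu.2]) _) (Real.rpow_nonneg hu.1.le _)
  have hkk_val : ∫ u in Set.Ioc (0:ℝ) 1, kk u
      = Real.Gamma γ * Real.Gamma α / Real.Gamma (γ + α) := by
    rw [← intervalIntegral.integral_of_le zero_le_one, ← realBeta_s12 hγ0 hα0]
    apply intervalIntegral.integral_congr
    intro u _
    simp only [hkk]
    ring
  -- the Ψ part of the operator
  set Ψ : X → ℝ → ℝ := fun G t => ∫ u in Set.Ioc (0:ℝ) 1, kk u * Hc G (a + (t - a) * u)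
    with hΨ
  have hψ_meas : ∀ (G : X) (t : ℝ), AEStronglyMeasurable (fun u => kk u * Hc G (a + (t - a) * u))
      (volume.restrict (Set.Ioc (0:ℝ) 1)) := by
    intro G t
    exact (hkk_meas.aestronglyMeasurable.mul
      (((hHc G).comp (continuous_const.add (continuous_const.mul continuous_id))).aestronglyMeasurable)).restrict
  have hψ_int : ∀ (G : X) (t : ℝ), IntegrableOn (fun u => kk u * Hc G (a + (t - a) * u))
      (Set.Ioc (0:ℝ) 1) volume := by
    intro G t
    apply Integrable.mono' (hkk_int.mul_const (M G)) (hψ_meas G t)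
    filter_upwards [ae_restrict_mem measurableSet_Ioc] with u hu
    rw [Real.norm_eq_abs, abs_mul, abs_of_nonneg (hkk_nonneg u hu)]
    exact mul_le_mul_of_nonneg_left (hMb G _) (hkk_nonneg u hu)
  have hΨcont : ∀ G : X, Continuous (Ψ G) := by
    intro G
    apply MeasureTheory.continuous_of_dominated (bound := fun u => kk u * M G)
      (fun t => hψ_meas G t) ?_ (hkk_int.mul_const (M G)) ?_
    · intro t
      filter_upwards [ae_restrict_mem measurableSet_Ioc] with u hu
      rw [Real.norm_eq_abs, abs_mul, abs_of_nonneg (hkk_nonneg u hu)]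
      exact mul_le_mul_of_nonneg_left (hMb G _) (hkk_nonneg u hu)
    · apply Filter.Eventually.of_forall
      intro u
      exact continuous_const.mul ((hHc G).comp
        ((continuous_const.add ((continuous_id.sub continuous_const).mul continuous_const))))
  have hΨbd : ∀ (G1 G2 : X) (t : ℝ), |Ψ G1 t - Ψ G2 t| ≤
      L * dist G1 G2 * (Real.Gamma γ * Real.Gamma α / Real.Gamma (γ + α)) := by
    intro G1 G2 t
    have hsub : Ψ G1 t - Ψ G2 t = ∫ u in Set.Ioc (0:ℝ) 1,
        (kk u * Hc G1 (a + (t - a) * u) - kk u * Hc G2 (a + (t - a) * u)) := by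
      rw [MeasureTheory.integral_sub (hψ_int G1 t) (hψ_int G2 t)]
    rw [hsub]
    have hb := MeasureTheory.norm_integral_le_of_norm_le
      (f := fun u => kk u * Hc G1 (a + (t - a) * u) - kk u * Hc G2 (a + (t - a) * u))
      (g := fun u => kk u * (L * dist G1 G2))
      (μ := volume.restrict (Set.Ioc (0:ℝ) 1)) (hkk_int.mul_const _) ?_
    · rw [Real.norm_eq_abs] at hb
      refine hb.trans ?_
      rw [MeasureTheory.integral_mul_const, hkk_val]
      ring_nf
      exact le_refl _
    · filter_upwards [ae_restrict_mem measurableSet_Ioc] with u hu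
      rw [Real.norm_eq_abs, ← mul_sub, abs_mul, abs_of_nonneg (hkk_nonneg u hu)]
      exact mul_le_mul_of_nonneg_left (hΔH G1 G2 _) (hkk_nonneg u hu)
  -- the boundary-term integrals
  have hpag : (-1:ℝ) < α - γ := by linarith
  have hqg : (-1:ℝ) < γ - 1 := by linarith
  have hbker : IntervalIntegrable (fun s => (b - s) ^ (α - γ) * (s - a) ^ (γ - 1)) volume a b :=
    kernel_intervalIntegrable hab hpag hqg
  have hbker_on : IntegrableOn (fun s => (b - s) ^ (α - γ) * (s - a) ^ (γ - 1))
      (Set.Ioc a b) volume :=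
    (intervalIntegrable_iff_integrableOn_Ioc_of_le hab.le).1 hbker
  have hkval2 : ∫ s in a..b, (b - s) ^ (α - γ) * (s - a) ^ (γ - 1)
      = (b - a) ^ α * (Real.Gamma γ * Real.Gamma (α - γ + 1) / Real.Gamma (α + 1)) := by
    have hv := kernel_integral_value hab hpag hqg
    rw [show (α - γ) + (γ - 1) + 1 = α by ring, show (γ - 1) + 1 = γ by ring,
      show γ + ((α - γ) + 1) = α + 1 by ring] at hv
    exact hv
  have hS_int : ∀ G : X,
      IntervalIntegrable (fun s => (b - s) ^ (α - γ) * f s (ze G s)) volume a b := by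
    intro G
    rw [intervalIntegrable_iff_integrableOn_Ioc_of_le hab.le]
    have hmeas : AEStronglyMeasurable (fun s => (b - s) ^ (α - γ) * f s (ze G s))
        (volume.restrict (Set.Ioc a b)) := by
      apply AEStronglyMeasurable.congr
        (f := fun s => (b - s) ^ (α - γ) * ((s - a) ^ (γ - 1) * Hc G s))
      · exact (((by fun_prop : Measurable fun s : ℝ => (b - s) ^ (α - γ))).mul
          (((by fun_prop : Measurable fun s : ℝ => (s - a) ^ (γ - 1))).mul
            (hHc G).measurable)).aestronglyMeasurable.restrict
      · filter_upwards [ae_restrict_mem measurableSet_Ioc] with s hs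
        rw [hHeq G s hs]
    apply Integrable.mono' (hbker_on.mul_const (M G)) hmeas
    filter_upwards [ae_restrict_mem measurableSet_Ioc] with s hs
    have hbs : (0:ℝ) ≤ (b - s) ^ (α - γ) := Real.rpow_nonneg (by linarith [hs.2]) _
    have hsa : (0:ℝ) ≤ (s - a) ^ (γ - 1) := Real.rpow_nonneg (by linarith [hs.1]) _
    rw [Real.norm_eq_abs, hHeq G s hs, abs_mul, abs_mul, abs_of_nonneg hbs, abs_of_nonneg hsa,
      mul_assoc]
    apply mul_le_mul_of_nonneg_left _ hbs
    exact mul_le_mul_of_nonneg_left (hMb G s) hsa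
  have hSdiff : ∀ G1 G2 : X,
      |(∫ s in a..b, (b - s) ^ (α - γ) * f s (ze G1 s)) -
        ∫ s in a..b, (b - s) ^ (α - γ) * f s (ze G2 s)|
      ≤ L * dist G1 G2 * ((b - a) ^ α *
          (Real.Gamma γ * Real.Gamma (α - γ + 1) / Real.Gamma (α + 1))) := by
    intro G1 G2
    rw [← intervalIntegral.integral_sub (hS_int G1) (hS_int G2)]
    have hb := intervalIntegral.norm_integral_le_abs_of_norm_le (μ := volume)
      (f := fun s => (b - s) ^ (α - γ) * f s (ze G1 s) - (b - s) ^ (α - γ) * f s (ze G2 s))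
      (g := fun s => (b - s) ^ (α - γ) * (s - a) ^ (γ - 1) * (L * dist G1 G2))
      (a := a) (b := b) ?_ (hbker.mul_const _)
    · rw [Real.norm_eq_abs] at hb
      refine hb.trans ?_
      rw [intervalIntegral.integral_mul_const, hkval2, abs_mul, abs_mul]
      rw [abs_of_nonneg (show (0:ℝ) ≤ (b - a) ^ α from Real.rpow_nonneg (by linarith) α),
        abs_of_nonneg (div_nonneg (mul_nonneg hΓγ.le
          (Real.Gamma_pos_of_pos (by linarith : (0:ℝ) < α - γ + 1)).le) hΓα1.le),
        abs_of_nonneg (mul_nonneg hL.le dist_nonneg)]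
      apply le_of_eq; ring
    · rw [Set.uIoc_of_le hab.le]
      filter_upwards [ae_restrict_mem measurableSet_Ioc] with s hs
      have hbs : (0:ℝ) ≤ (b - s) ^ (α - γ) := Real.rpow_nonneg (by linarith [hs.2]) _
      rw [Real.norm_eq_abs, ← mul_sub, abs_mul, abs_of_nonneg hbs]
      calc (b - s) ^ (α - γ) * |f s (ze G1 s) - f s (ze G2 s)|
          ≤ (b - s) ^ (α - γ) * (L * dist G1 G2 * (s - a) ^ (γ - 1)) :=
            mul_le_mul_of_nonneg_left (hΔF G1 G2 s hs) hbs
        _ = (b - s) ^ (α - γ) * (s - a) ^ (γ - 1) * (L * dist G1 G2) := by ring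
  -- the operator
  set Kc : X → ℝ := fun G => 1 / Real.Gamma γ * (e / (d * (1 + c / d))) -
      1 / (1 + c / d) * (1 / Real.Gamma γ) * ((1 / Real.Gamma (1 - γ + α)) *
        ∫ s in a..b, (b - s) ^ (α - γ) * f s (ze G s)) with hKc
  have hrpowα : Continuous fun x : ℝ => x ^ α :=
    continuous_iff_continuousAt.2 fun x => Real.continuousAt_rpow_const x α (Or.inr hα0.le)
  set gT : X → ℝ → ℝ := fun G t => Kc G + (t - a) ^ α / Real.Gamma α * Ψ G t with hgT
  have hgTcont : ∀ G : X, Continuous (gT G) := fun G =>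
    continuous_const.add
      (((hrpowα.comp (continuous_sub_right a)).div_const _).mul (hΨcont G))
  set T : X → X := fun G => ⟨fun t => gT G t, (hgTcont G).comp continuous_subtype_val⟩ with hT
  -- the contraction estimate
  set W : ℝ := (|1 / (1 + c / d)| / Real.Gamma (α + 1) +
      Real.Gamma γ / Real.Gamma (γ + α)) * (b - a) ^ α * L with hW
  have hW0 : 0 ≤ W := by
    apply mul_nonneg (mul_nonneg (add_nonneg (div_nonneg (abs_nonneg _) hΓα1.le)
      (div_nonneg hΓγ.le hΓγα.le)) (Real.rpow_nonneg (by linarith) _)) hL.le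
  have hKdiff : ∀ G1 G2 : X, |Kc G1 - Kc G2| ≤
      |1 / (1 + c / d)| / Real.Gamma (α + 1) * (b - a) ^ α * L * dist G1 G2 := by
    intro G1 G2
    have e1 : Kc G1 - Kc G2 = -(1 / (1 + c / d)) * (1 / Real.Gamma γ) *
        (1 / Real.Gamma (1 - γ + α)) *
        ((∫ s in a..b, (b - s) ^ (α - γ) * f s (ze G1 s)) -
          ∫ s in a..b, (b - s) ^ (α - γ) * f s (ze G2 s)) := by
      rw [hKc]; ring
    rw [e1, abs_mul, abs_mul, abs_mul, abs_neg,
      abs_of_nonneg (by positivity : (0:ℝ) ≤ 1 / Real.Gamma γ),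
      abs_of_nonneg (by positivity : (0:ℝ) ≤ 1 / Real.Gamma (1 - γ + α))]
    calc |1 / (1 + c / d)| * (1 / Real.Gamma γ) * (1 / Real.Gamma (1 - γ + α)) *
          |(∫ s in a..b, (b - s) ^ (α - γ) * f s (ze G1 s)) -
            ∫ s in a..b, (b - s) ^ (α - γ) * f s (ze G2 s)|
        ≤ |1 / (1 + c / d)| * (1 / Real.Gamma γ) * (1 / Real.Gamma (1 - γ + α)) *
          (L * dist G1 G2 * ((b - a) ^ α *
            (Real.Gamma γ * Real.Gamma (α - γ + 1) / Real.Gamma (α + 1)))) := by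
          apply mul_le_mul_of_nonneg_left (hSdiff G1 G2) (by positivity)
      _ = |1 / (1 + c / d)| / Real.Gamma (α + 1) * (b - a) ^ α * L * dist G1 G2 := by
          rw [show (1:ℝ) - γ + α = α - γ + 1 by ring]
          have hΓ1 : Real.Gamma γ ≠ 0 := hΓγ.ne'
          have hΓ2 : Real.Gamma (α - γ + 1) ≠ 0 := (Real.Gamma_pos_of_pos (by linarith)).ne'
          have hΓ3 : Real.Gamma (α + 1) ≠ 0 := hΓα1.ne'
          field_simp
  have hTlip : ∀ G1 G2 : X, dist (T G1) (T G2) ≤ W * dist G1 G2 := by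
    intro G1 G2
    rw [ContinuousMap.dist_le (mul_nonneg hW0 (dist_nonneg (α := C(Set.Icc a b, ℝ))))]
    intro x
    have hxa : (0:ℝ) ≤ (x:ℝ) - a := by linarith [x.2.1]
    have hxb : ((x:ℝ) - a) ^ α ≤ (b - a) ^ α :=
      Real.rpow_le_rpow hxa (by linarith [x.2.2]) hα0.le
    show dist (gT G1 x) (gT G2 x) ≤ W * dist G1 G2
    rw [Real.dist_eq]
    have e2 : gT G1 x - gT G2 x = (Kc G1 - Kc G2) +
        ((x:ℝ) - a) ^ α / Real.Gamma α * (Ψ G1 x - Ψ G2 x) := by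
      rw [hgT]; ring
    rw [e2]
    calc |Kc G1 - Kc G2 + ((x:ℝ) - a) ^ α / Real.Gamma α * (Ψ G1 x - Ψ G2 x)|
        ≤ |Kc G1 - Kc G2| + ((x:ℝ) - a) ^ α / Real.Gamma α * |Ψ G1 x - Ψ G2 x| := by
          refine (abs_add_le _ _).trans ?_
          rw [abs_mul, abs_of_nonneg (by positivity : (0:ℝ) ≤ ((x:ℝ) - a) ^ α / Real.Gamma α)]
      _ ≤ |1 / (1 + c / d)| / Real.Gamma (α + 1) * (b - a) ^ α * L * dist G1 G2 +
          (b - a) ^ α / Real.Gamma α *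
            (L * dist G1 G2 * (Real.Gamma γ * Real.Gamma α / Real.Gamma (γ + α))) := by
          apply add_le_add (hKdiff G1 G2)
          exact mul_le_mul ((div_le_div_iff_of_pos_right hΓα).2 hxb) (hΨbd G1 G2 x) (abs_nonneg _)
            (div_nonneg (Real.rpow_nonneg (by linarith) _) hΓα.le)
      _ = W * dist G1 G2 := by
          rw [hW]
          have hΓ4 : Real.Gamma α ≠ 0 := hΓα.ne'
          have hΓ5 : Real.Gamma (γ + α) ≠ 0 := hΓγα.ne'
          field_simp
  -- Banach fixed point
  have hW1 : W < 1 := hH5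
  have hCW : ContractingWith ⟨W, hW0⟩ T := by
    constructor
    · exact_mod_cast hW1
    · exact LipschitzWith.of_dist_le_mul fun G1 G2 => hTlip G1 G2
  set Gfix : X := ContractingWith.fixedPoint T hCW with hGfix
  have hfixeq : T Gfix = Gfix := hCW.fixedPoint_isFixedPt
  refine ⟨ze Gfix, hmem Gfix, ?_⟩
  intro t ht
  have htIcc : t ∈ Set.Icc a b := ⟨ht.1.le, ht.2⟩
  have hta : 0 < t - a := by linarith [ht.1]
  -- rewrite the fixed point equation at t
  have hz : ze Gfix t = (t - a) ^ (γ - 1) * gT Gfix t := by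
    have h0 : Gfix ⟨t, htIcc⟩ = (T Gfix) ⟨t, htIcc⟩ := by rw [hfixeq]
    simp only [hze]
    rw [Set.IccExtend_of_mem hab.le _ htIcc, h0]
    rfl
  -- the singular-integral term
  have hthird : (1 / Real.Gamma α) * ∫ s in a..t, (t - s) ^ (α - 1) * f s (ze Gfix s)
      = (t - a) ^ (γ - 1) * ((t - a) ^ α / Real.Gamma α * Ψ Gfix t) := by
    have hcongr : ∫ s in a..t, (t - s) ^ (α - 1) * f s (ze Gfix s)
        = ∫ s in a..t, (t - s) ^ (α - 1) * (s - a) ^ (γ - 1) * Hc Gfix s := by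
      apply intervalIntegral.integral_congr_ae
      filter_upwards with s hs
      rw [Set.uIoc_of_le ht.1.le] at hs
      have hsIoc : s ∈ Set.Ioc a b := ⟨hs.1, hs.2.trans ht.2⟩
      rw [hHeq Gfix s hsIoc]; ring
    have hΨt : Ψ Gfix t = ∫ u in (0:ℝ)..1, (1 - u) ^ (α - 1) * u ^ (γ - 1) *
        Hc Gfix (a + (t - a) * u) := by
      rw [intervalIntegral.integral_of_le zero_le_one]
    rw [hcongr, kernel_subst (Hc Gfix) ht.1 (α - 1) (γ - 1), hΨt,
      show (α - 1) + (γ - 1) + 1 = α + γ - 1 by ring]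
    rw [show (t - a) ^ (γ - 1) * ((t - a) ^ α / Real.Gamma α *
        ∫ u in (0:ℝ)..1, (1 - u) ^ (α - 1) * u ^ (γ - 1) * Hc Gfix (a + (t - a) * u))
      = (t - a) ^ (γ - 1) * (t - a) ^ α *
        (1 / Real.Gamma α * ∫ u in (0:ℝ)..1, (1 - u) ^ (α - 1) * u ^ (γ - 1) *
          Hc Gfix (a + (t - a) * u)) by ring]
    rw [← Real.rpow_add hta, show γ - 1 + α = α + γ - 1 by ring]
    ring
  rw [hz, show gT Gfix t = Kc Gfix + (t - a) ^ α / Real.Gamma α * Ψ Gfix t from rfl, mul_add,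
    ← hthird, show Kc Gfix = 1 / Real.Gamma γ * (e / (d * (1 + c / d))) -
      1 / (1 + c / d) * (1 / Real.Gamma γ) * ((1 / Real.Gamma (1 - γ + α)) *
        ∫ s in a..b, (b - s) ^ (α - γ) * f s (ze Gfix s)) from rfl]
  ring
end

section
/- Fix real numbers a < b, α ∈ (0,1), β ∈ [0,1], and set γ = α + β(1−α). Let f : (a,b]×ℝ → ℝ be continuous, such that t ↦ f(t, z(t)) belongs to C_{1−γ}[a,b] for every z ∈ C_{1−γ}[a,b], and let c, d, e ∈ ℝ with d ≠ 0 and 1 + c/d ≠ 0. Assume (H4): there exists L > 0 such that |f(t, u) − f(t, v)| ≤ L|u − v| for all t ∈ (a,b] and all u, v ∈ ℝ; and assume (H5): W := [ |1/(1+c/d)|/Γ(α+1) + Γ(γ)/Γ(γ+α) ]·(b−a)^α·L < 1. Then there is exactly one function z ∈ C_{1−γ}[a,b] satisfying for all t ∈ (a,b] the integral equation z(t) = ((t−a)^{γ−1}/Γ(γ))·(e/(d(1+c/d))) − (1/(1+c/d))·((t−a)^{γ−1}/Γ(γ))·(1/Γ(1−γ+α)) ∫_a^b (b−s)^{α−γ}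 f(s, z(s)) ds + (1/Γ(α)) ∫_a^t (t−s)^{α−1} f(s, z(s)) ds; that is, the Hilfer boundary value problem D^{α,β}_a z(t) = f(t, z(t)) with c·lim_{t→a^+}(I^{1−γ}_a z)(t) + d·lim_{t→b^−}(I^{1−γ}_a z)(t) = e has a unique solution. -/
open Set MeasureTheory intervalIntegral Topology Filter

/-- integrability of the beta-type kernel on `a..t` -/
lemma kint {a t r w : ℝ} (h : a < t) (hr : -1 < r) (hw : -1 < w) :
    IntervalIntegrable (fun s => (t - s) ^ r * (s - a) ^ w) volume a t := by
  have hm1 : a < (a + t) / 2 := by linarith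
  have hm2 : (a + t) / 2 < t := by linarith
  apply IntervalIntegrable.trans (b := (a + t) / 2)
  · have h1 : IntervalIntegrable (fun s : ℝ => (s - a) ^ w) volume a ((a + t) / 2) := by
      have := (intervalIntegrable_rpow' (a := 0) (b := (a + t) / 2 - a) hw).comp_sub_right a
      simpa using this
    have h2 : ContinuousOn (fun s : ℝ => (t - s) ^ r) (uIcc a ((a + t) / 2)) := by
      apply ContinuousOn.rpow_const (by fun_prop)
      intro x hx
      rw [uIcc_of_le hm1.le] at hx
      exact Or.inl (sub_ne_zero.mpr (by linarith [hx.2]))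
    simpa [mul_comm] using h1.mul_continuousOn h2
  · have h1 : IntervalIntegrable (fun s : ℝ => (t - s) ^ r) volume ((a + t) / 2) t := by
      have := (intervalIntegrable_rpow' (a := t - (a + t) / 2) (b := 0) hr).comp_sub_left t
      simpa using this
    have h2 : ContinuousOn (fun s : ℝ => (s - a) ^ w) (uIcc ((a + t) / 2) t) := by
      apply ContinuousOn.rpow_const (by fun_prop)
      intro x hx
      rw [uIcc_of_le hm2.le] at hx
      exact Or.inl (sub_ne_zero.mpr (by linarith [hx.1]))
    exact h1.mul_continuousOn h2

/-- integrability of kernel times a continuous function -/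
lemma kintH {a t r w : ℝ} (h : a < t) (hr : -1 < r) (hw : -1 < w) {H : ℝ → ℝ}
    (hH : ContinuousOn H (uIcc a t)) :
    IntervalIntegrable (fun s => (t - s) ^ r * ((s - a) ^ w * H s)) volume a t := by
  simpa [mul_assoc] using (kint h hr hw).mul_continuousOn hH
lemma beta01 {r w : ℝ} (hr : -1 < r) (hw : -1 < w) :
    ∫ u in (0:ℝ)..1, (1 - u) ^ r * u ^ w
      = Real.Gamma (r + 1) * Real.Gamma (w + 1) / Real.Gamma (r + w + 2) := by
  have hw1 : (0:ℝ) < w + 1 := by linarith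
  have hr1 : (0:ℝ) < r + 1 := by linarith
  have hB : Complex.betaIntegral (w + 1 : ℝ) (r + 1 : ℝ)
      = ((∫ u in (0:ℝ)..1, u ^ w * (1 - u) ^ r : ℝ) : ℂ) := by
    rw [Complex.betaIntegral, ← intervalIntegral.integral_ofReal]
    apply intervalIntegral.integral_congr
    intro x hx
    rw [uIcc_of_le (by norm_num : (0:ℝ) ≤ 1)] at hx
    push_cast
    rw [Complex.ofReal_cpow hx.1, Complex.ofReal_cpow (by linarith [hx.2])]
    push_cast
    ring_nf
  have hG := Complex.Gamma_mul_Gamma_eq_betaIntegral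
    (s := (w + 1 : ℝ)) (t := (r + 1 : ℝ)) (by simpa using hw1) (by simpa using hr1)
  rw [hB] at hG
  have hsum : ((w + 1 : ℝ) : ℂ) + ((r + 1 : ℝ) : ℂ) = ((r + w + 2 : ℝ) : ℂ) := by push_cast; ring
  rw [hsum, Complex.Gamma_ofReal, Complex.Gamma_ofReal, Complex.Gamma_ofReal] at hG
  have hG' : Real.Gamma (w + 1) * Real.Gamma (r + 1)
      = Real.Gamma (r + w + 2) * ∫ u in (0:ℝ)..1, u ^ w * (1 - u) ^ r := by
    exact_mod_cast hG
  have hpos := Real.Gamma_pos_of_pos (by linarith : (0:ℝ) < r + w + 2)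
  have : ∫ u in (0:ℝ)..1, u ^ w * (1 - u) ^ r
      = Real.Gamma (r + 1) * Real.Gamma (w + 1) / Real.Gamma (r + w + 2) := by
    field_simp
    linarith [hG']
  rw [← this]
  apply intervalIntegral.integral_congr
  intro x _; ring
lemma ksubst {a t : ℝ} (h : a < t) (r w : ℝ) (H : ℝ → ℝ) :
    ∫ s in a..t, (t - s) ^ r * ((s - a) ^ w * H s)
      = (t - a) ^ (r + w + 1) *
        ∫ u in (0:ℝ)..1, (1 - u) ^ r * (u ^ w * H ((t - a) * u + a)) := by
  have hc : t - a ≠ 0 := sub_ne_zero.mpr h.ne'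
  have hc0 : (0:ℝ) < t - a := sub_pos.mpr h
  set G : ℝ → ℝ := fun s => (t - s) ^ r * ((s - a) ^ w * H s) with hG
  have hsub := intervalIntegral.integral_comp_mul_add (a := (0:ℝ)) (b := 1) G hc a
  have hb1 : (t - a) * 0 + a = a := by ring
  have hb2 : (t - a) * 1 + a = t := by ring
  rw [hb1, hb2] at hsub
  have key : ∫ u in (0:ℝ)..1, G ((t - a) * u + a)
      = ∫ u in (0:ℝ)..1, ((t-a)^r * (t-a)^w) *
          ((1 - u) ^ r * (u ^ w * H ((t - a) * u + a))) := by
    apply intervalIntegral.integral_congr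
    intro u hu
    rw [uIcc_of_le (by norm_num : (0:ℝ) ≤ 1)] at hu
    have h1 : t - ((t - a) * u + a) = (t - a) * (1 - u) := by ring
    have h2 : (t - a) * u + a - a = (t - a) * u := by ring
    simp only [hG, h1, h2]
    rw [Real.mul_rpow hc0.le (by linarith [hu.2]), Real.mul_rpow hc0.le hu.1]
    ring
  rw [key, intervalIntegral.integral_const_mul] at hsub
  have : ∫ s in a..t, G s = (t - a) * ((t-a)⁻¹ • (∫ s in a..t, G s)) := by
    rw [smul_eq_mul]; field_simp
  rw [this, ← hsub, ← mul_assoc, ← mul_assoc]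
  congr 1
  rw [Real.rpow_add hc0, Real.rpow_add hc0, Real.rpow_one]
  ring

lemma kval {a t r w : ℝ} (h : a < t) (hr : -1 < r) (hw : -1 < w) :
    ∫ s in a..t, (t - s) ^ r * (s - a) ^ w
      = Real.Gamma (r + 1) * Real.Gamma (w + 1) / Real.Gamma (r + w + 2)
        * (t - a) ^ (r + w + 1) := by
  have h1 : ∫ s in a..t, (t - s) ^ r * (s - a) ^ w
      = ∫ s in a..t, (t - s) ^ r * ((s - a) ^ w * (fun _ : ℝ => (1:ℝ)) s) :=
    intervalIntegral.integral_congr (fun s _ => by simp)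
  rw [h1, ksubst h r w]
  have h2 : ∫ u in (0:ℝ)..1, (1 - u) ^ r * (u ^ w * (fun _ : ℝ => (1:ℝ)) ((t - a) * u + a))
      = ∫ u in (0:ℝ)..1, (1 - u) ^ r * u ^ w :=
    intervalIntegral.integral_congr (fun s _ => by simp)
  rw [h2, beta01 hr hw, mul_comm]

lemma kbound {a t r w : ℝ} (h : a < t) (hr : -1 < r) (hw : -1 < w) {H : ℝ → ℝ} {M : ℝ}
    (hM0 : 0 ≤ M) (hM : ∀ s ∈ Ioc a t, |H s| ≤ M) :
    |∫ s in a..t, (t - s) ^ r * ((s - a) ^ w * H s)|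
      ≤ Real.Gamma (r + 1) * Real.Gamma (w + 1) / Real.Gamma (r + w + 2)
        * (t - a) ^ (r + w + 1) * M := by
  have hint : IntervalIntegrable (fun s => (t - s) ^ r * ((s - a) ^ w * M)) volume a t :=
    kintH h hr hw continuousOn_const
  have hae : ∀ᵐ s ∂(volume.restrict (Set.uIoc a t)),
      ‖(t - s) ^ r * ((s - a) ^ w * H s)‖ ≤ (t - s) ^ r * ((s - a) ^ w * M) := by
    rw [uIoc_of_le h.le]
    refine (ae_restrict_iff' measurableSet_Ioc).mpr (ae_of_all _ fun s hs => ?_)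
    have h1 : (0:ℝ) ≤ (t - s) ^ r := Real.rpow_nonneg (by linarith [hs.2]) r
    have h2 : (0:ℝ) ≤ (s - a) ^ w := Real.rpow_nonneg (by linarith [hs.1]) w
    rw [Real.norm_eq_abs, abs_mul, abs_mul, abs_of_nonneg h1, abs_of_nonneg h2]
    exact mul_le_mul_of_nonneg_left
      (mul_le_mul_of_nonneg_left (hM s hs) h2) h1
  have hb := intervalIntegral.norm_integral_le_abs_of_norm_le hae hint
  rw [Real.norm_eq_abs] at hb
  refine hb.trans ?_
  have hval : ∫ s in a..t, (t - s) ^ r * ((s - a) ^ w * M)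
      = Real.Gamma (r + 1) * Real.Gamma (w + 1) / Real.Gamma (r + w + 2)
        * (t - a) ^ (r + w + 1) * M := by
    have : ∫ s in a..t, (t - s) ^ r * ((s - a) ^ w * M)
        = ∫ s in a..t, ((t - s) ^ r * (s - a) ^ w) * M :=
      intervalIntegral.integral_congr (fun s _ => by ring)
    rw [this, intervalIntegral.integral_mul_const, kval h hr hw]
  rw [hval, abs_of_nonneg]
  have g1 := Real.Gamma_pos_of_pos (by linarith : (0:ℝ) < r + 1)
  have g2 := Real.Gamma_pos_of_pos (by linarith : (0:ℝ) < w + 1)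
  have g3 := Real.Gamma_pos_of_pos (by linarith : (0:ℝ) < r + w + 2)
  have h4 : (0:ℝ) ≤ (t - a) ^ (r + w + 1) := Real.rpow_nonneg (by linarith) _
  positivity

lemma Jcont {a r w : ℝ} (hr : -1 < r) (hw : -1 < w) {H : ℝ → ℝ} (hH : Continuous H)
    {M : ℝ} (hM : ∀ x, |H x| ≤ M) :
    Continuous fun t : ℝ => ∫ u in (0:ℝ)..1, (1 - u) ^ r * (u ^ w * H ((t - a) * u + a)) := by
  apply intervalIntegral.continuous_of_dominated_interval
    (bound := fun u => (1 - u) ^ r * (u ^ w * M))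
  · intro t
    exact (by fun_prop :
      Measurable fun u : ℝ => (1 - u) ^ r * (u ^ w * H ((t - a) * u + a))).aestronglyMeasurable
  · intro t
    refine ae_of_all _ fun u hu => ?_
    rw [uIoc_of_le (by norm_num : (0:ℝ) ≤ 1)] at hu
    have h1 : (0:ℝ) ≤ (1 - u) ^ r := Real.rpow_nonneg (by linarith [hu.2]) r
    have h2 : (0:ℝ) ≤ u ^ w := Real.rpow_nonneg (le_of_lt hu.1) w
    rw [Real.norm_eq_abs, abs_mul, abs_mul, abs_of_nonneg h1, abs_of_nonneg h2]
    exact mul_le_mul_of_nonneg_left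
      (mul_le_mul_of_nonneg_left (hM _) h2) h1
  · have := kintH (a := 0) (t := 1) (by norm_num) hr hw (H := fun _ => M) continuousOn_const
    simpa using this
  · refine ae_of_all _ fun u _ => ?_
    fun_prop

open Topology Filter




/-- **Uniqueness for the Hilfer BVP (Corollary 3.5).**  Fix `a < b`,
`α ∈ (0,1)`, `β ∈ [0,1]`, `γ = α + β(1−α)`.  Let `f : (a,b]×ℝ → ℝ` be
continuous, mapping `C_{1−γ}[a,b]` into `C_{1−γ}[a,b]` via `z ↦ f(·,z(·))`,
and let `c, d, e ∈ ℝ` with `d ≠ 0`, `1 + c/d ≠ 0`.  Assume (H4):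
`|f(t,u) − f(t,v)| ≤ L|u−v|` with `L > 0`, and (H5):
`W = [|1/(1+c/d)|/Γ(α+1) + Γ(γ)/Γ(γ+α)](b−a)^α L < 1`.  Then the equivalent
integral equation of the BVP has exactly one solution `z ∈ C_{1−γ}[a,b]`
(unique as a function on `(a,b]`). -/
theorem hilfer_bvp_uniqueness (a b α β γ : ℝ) (hab : a < b)
    (hα0 : 0 < α) (hα1 : α < 1) (hβ0 : 0 ≤ β) (hβ1 : β ≤ 1)
    (hγ : γ = α + β * (1 - α))
    (f : ℝ → ℝ → ℝ)
    (hfc : ContinuousOn (fun p : ℝ × ℝ => f p.1 p.2) (Set.Ioc a b ×ˢ Set.univ))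
    (hf : ∀ z : ℝ → ℝ, memCw a b (1 - γ) z → memCw a b (1 - γ) (fun t => f t (z t)))
    (c d e : ℝ) (hd : d ≠ 0) (hcd : 1 + c / d ≠ 0)
    (L : ℝ) (hL : 0 < L)
    (hH4 : ∀ t ∈ Set.Ioc a b, ∀ u v : ℝ, |f t u - f t v| ≤ L * |u - v|)
    (hH5 : (|1 / (1 + c / d)| / Real.Gamma (α + 1) +
        Real.Gamma γ / Real.Gamma (γ + α)) * (b - a) ^ α * L < 1) :
    ∃ z : ℝ → ℝ,
      (memCw a b (1 - γ) z ∧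
        ∀ t ∈ Set.Ioc a b,
          z t = (t - a) ^ (γ - 1) / Real.Gamma γ * (e / (d * (1 + c / d))) -
              (1 / (1 + c / d)) * ((t - a) ^ (γ - 1) / Real.Gamma γ) *
                ((1 / Real.Gamma (1 - γ + α)) *
                  ∫ s in a..b, (b - s) ^ (α - γ) * f s (z s)) +
              (1 / Real.Gamma α) * ∫ s in a..t, (t - s) ^ (α - 1) * f s (z s)) ∧
      ∀ w : ℝ → ℝ,
        (memCw a b (1 - γ) w ∧
          ∀ t ∈ Set.Ioc a b,
            w t = (t - a) ^ (γ - 1) / Real.Gamma γ * (e / (d * (1 + c / d))) -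
                (1 / (1 + c / d)) * ((t - a) ^ (γ - 1) / Real.Gamma γ) *
                  ((1 / Real.Gamma (1 - γ + α)) *
                    ∫ s in a..b, (b - s) ^ (α - γ) * f s (w s)) +
                (1 / Real.Gamma α) * ∫ s in a..t, (t - s) ^ (α - 1) * f s (w s)) →
        ∀ t ∈ Set.Ioc a b, w t = z t := by
  classical
  have h1α : 0 < 1 - α := by linarith
  have hγ0 : 0 < γ := by nlinarith
  have hγ1 : γ ≤ 1 := by nlinarith
  have hba : 0 < b - a := sub_pos.mpr hab
  have Gα : 0 < Real.Gamma α := Real.Gamma_pos_of_pos hα0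
  have Gγ : 0 < Real.Gamma γ := Real.Gamma_pos_of_pos hγ0
  have Gα1 : 0 < Real.Gamma (α + 1) := Real.Gamma_pos_of_pos (by linarith)
  have Gγα : 0 < Real.Gamma (γ + α) := Real.Gamma_pos_of_pos (by linarith)
  have Gαγ : 0 < Real.Gamma (α + γ) := Real.Gamma_pos_of_pos (by linarith)
  have G1γα : 0 < Real.Gamma (1 - γ + α) := Real.Gamma_pos_of_pos (by linarith)
  have hrB : (-1:ℝ) < α - γ := by linarith
  have hrα : (-1:ℝ) < α - 1 := by linarith
  have hwγ : (-1:ℝ) < γ - 1 := by linarith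
  set W : ℝ := (|1 / (1 + c / d)| / Real.Gamma (α + 1) +
      Real.Gamma γ / Real.Gamma (γ + α)) * (b - a) ^ α * L with hW
  have hW0 : 0 ≤ W := by
    apply mul_nonneg (mul_nonneg _ (Real.rpow_nonneg hba.le α)) hL.le
    positivity
  haveI : CompactSpace (Set.Icc a b) := isCompact_iff_compactSpace.mp isCompact_Icc
  haveI : Nonempty C(Set.Icc a b, ℝ) := ⟨0⟩
  haveI hne : (𝓝[Set.Ioc a b] a).NeBot := by
    apply mem_closure_iff_nhdsWithin_neBot.mp
    rw [closure_Ioc hab.ne]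
    exact Set.left_mem_Icc.mpr hab.le
  have canc : ∀ {t : ℝ}, a < t → (t - a) ^ (1 - γ) * (t - a) ^ (γ - 1) = 1 := by
    intro t ht
    rw [← Real.rpow_add (sub_pos.mpr ht)]
    have h : 1 - γ + (γ - 1) = 0 := by ring
    rw [h, Real.rpow_zero]
  have canc2 : ∀ {t : ℝ}, a < t → (t - a) ^ (γ - 1) * (t - a) ^ (1 - γ) = 1 := by
    intro t ht
    rw [mul_comm]; exact canc ht
  -- the weighted function associated to G
  obtain ⟨zf, hzf⟩ : ∃ zf : C(Set.Icc a b, ℝ) → ℝ → ℝ,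
      zf = fun (G : C(Set.Icc a b, ℝ)) (t : ℝ) => (t - a) ^ (γ - 1) * Set.IccExtend hab.le (⇑G) t := ⟨_, rfl⟩
  have memz : ∀ G : C(Set.Icc a b, ℝ), memCw a b (1 - γ) (zf G) := by
    intro G
    refine ⟨Set.IccExtend hab.le ⇑G, G.continuous.Icc_extend'.continuousOn, ?_⟩
    intro t ht
    rw [hzf]
    show Set.IccExtend hab.le ⇑G t
      = (t - a) ^ (1 - γ) * ((t - a) ^ (γ - 1) * Set.IccExtend hab.le ⇑G t)
    rw [← mul_assoc, canc ht.1, one_mul]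
  -- the right-hand side operator
  obtain ⟨R, hR⟩ : ∃ R : C(Set.Icc a b, ℝ) → ℝ → ℝ,
      R = fun G t =>
        (t - a) ^ (γ - 1) / Real.Gamma γ * (e / (d * (1 + c / d))) -
          (1 / (1 + c / d)) * ((t - a) ^ (γ - 1) / Real.Gamma γ) *
            ((1 / Real.Gamma (1 - γ + α)) *
              ∫ s in a..b, (b - s) ^ (α - γ) * f s (zf G s)) +
          (1 / Real.Gamma α) * ∫ s in a..t, (t - s) ^ (α - 1) * f s (zf G s) := ⟨_, rfl⟩
  -- continuous weighted representative H of f(·, z_G(·))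
  have hHdata : ∀ G : C(Set.Icc a b, ℝ), ∃ H : ℝ → ℝ, Continuous H ∧ (∃ M, ∀ x, |H x| ≤ M) ∧
      ∀ s ∈ Set.Ioc a b, f s (zf G s) = (s - a) ^ (γ - 1) * H s := by
    intro G
    obtain ⟨H₀, H₀c, H₀eq⟩ := hf (zf G) (memz G)
    refine ⟨Set.IccExtend hab.le ((Set.Icc a b).restrict H₀),
      H₀c.restrict.Icc_extend', ?_, ?_⟩
    · obtain ⟨M, hM⟩ := isCompact_Icc.exists_bound_of_continuousOn H₀c
      refine ⟨M, fun x => ?_⟩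
      have : Set.IccExtend hab.le ((Set.Icc a b).restrict H₀) x
          = H₀ ↑(Set.projIcc a b hab.le x) := rfl
      rw [this]
      simpa using hM _ (Set.projIcc a b hab.le x).2
    · intro s hs
      have h1 : Set.IccExtend hab.le ((Set.Icc a b).restrict H₀) s = H₀ s := by
        rw [Set.IccExtend_of_mem _ _ (Set.Ioc_subset_Icc_self hs)]
        rfl
      rw [h1, H₀eq s hs, ← mul_assoc, canc2 hs.1, one_mul]
  -- construction of the operator value T(G)
  have hT : ∀ G : C(Set.Icc a b, ℝ), ∃ T : C(Set.Icc a b, ℝ),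
      ∀ t, ∀ ht : t ∈ Set.Ioc a b,
        T ⟨t, Set.Ioc_subset_Icc_self ht⟩ = (t - a) ^ (1 - γ) * R G t := by
    intro G
    obtain ⟨H, Hc, ⟨M, hM⟩, hHf⟩ := hHdata G
    obtain ⟨J, hJdef⟩ : ∃ J : ℝ → ℝ, J = fun t : ℝ =>
        ∫ u in (0:ℝ)..1, (1 - u) ^ (α - 1) * (u ^ (γ - 1) * H ((t - a) * u + a)) := ⟨_, rfl⟩
    have hJc : Continuous J := by rw [hJdef]; exact Jcont hrα hwγ Hc hM
    obtain ⟨C1, hC1⟩ : ∃ C1 : ℝ,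
        C1 = 1 / Real.Gamma γ * (e / (d * (1 + c / d))) := ⟨_, rfl⟩
    obtain ⟨C2, hC2⟩ : ∃ C2 : ℝ, C2 = -((1 / (1 + c / d)) * (1 / Real.Gamma γ) *
        ((1 / Real.Gamma (1 - γ + α)) *
          ∫ s in a..b, (b - s) ^ (α - γ) * f s (zf G s))) := ⟨_, rfl⟩
    have hpow : Continuous fun t : ℝ => (t - a) ^ α :=
      (Real.continuous_rpow_const hα0.le).comp (continuous_id.sub continuous_const)
    have hTc : Continuous fun t : ℝ =>
        C1 + C2 + 1 / Real.Gamma α * ((t - a) ^ α * J t) :=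
      continuous_const.add (continuous_const.mul (hpow.mul hJc))
    refine ⟨⟨fun x => C1 + C2 + 1 / Real.Gamma α * ((↑x - a) ^ α * J ↑x),
      hTc.comp continuous_subtype_val⟩, ?_⟩
    intro t ht
    show C1 + C2 + 1 / Real.Gamma α * ((t - a) ^ α * J t) = (t - a) ^ (1 - γ) * R G t
    have hta : 0 < t - a := sub_pos.mpr ht.1
    have hi1 : ∫ s in a..t, (t - s) ^ (α - 1) * f s (zf G s)
        = ∫ s in a..t, (t - s) ^ (α - 1) * ((s - a) ^ (γ - 1) * H s) := by
      apply intervalIntegral.integral_congr_ae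
      refine Filter.Eventually.of_forall (fun s hs => ?_)
      rw [Set.uIoc_of_le ht.1.le] at hs
      rw [hHf s ⟨hs.1, hs.2.trans ht.2⟩]
    have hi2 : ∫ s in a..t, (t - s) ^ (α - 1) * ((s - a) ^ (γ - 1) * H s)
        = (t - a) ^ (α - 1 + (γ - 1) + 1) * J t := by
      rw [ksubst ht.1, hJdef]
    have e2 : (t - a) ^ (1 - γ) * (t - a) ^ (α - 1 + (γ - 1) + 1) = (t - a) ^ α := by
      rw [← Real.rpow_add hta]; congr 1; ring
    rw [hR]
    simp only []
    rw [hi1, hi2]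
    have expand : (t - a) ^ (1 - γ) *
        ((t - a) ^ (γ - 1) / Real.Gamma γ * (e / (d * (1 + c / d))) -
          1 / (1 + c / d) * ((t - a) ^ (γ - 1) / Real.Gamma γ) *
            (1 / Real.Gamma (1 - γ + α) *
              ∫ s in a..b, (b - s) ^ (α - γ) * f s (zf G s)) +
          1 / Real.Gamma α * ((t - a) ^ (α - 1 + (γ - 1) + 1) * J t))
      = ((t - a) ^ (1 - γ) * (t - a) ^ (γ - 1)) * (1 / Real.Gamma γ * (e / (d * (1 + c / d)))) -
        ((t - a) ^ (1 - γ) * (t - a) ^ (γ - 1)) * ((1 / (1 + c / d)) * (1 / Real.Gamma γ) *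
            ((1 / Real.Gamma (1 - γ + α)) *
              ∫ s in a..b, (b - s) ^ (α - γ) * f s (zf G s))) +
        1 / Real.Gamma α * (((t - a) ^ (1 - γ) * (t - a) ^ (α - 1 + (γ - 1) + 1)) * J t) := by
      ring
    rw [expand, canc ht.1, e2, hC1, hC2]
    ring
  -- distance bound between IccExtends
  have hgdist : ∀ (G₁ G₂ : C(Set.Icc a b, ℝ)), ∀ s ∈ Set.Icc a b,
      |Set.IccExtend hab.le ⇑G₁ s - Set.IccExtend hab.le ⇑G₂ s| ≤ dist G₁ G₂ := by
    intro G₁ G₂ s hs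
    rw [Set.IccExtend_of_mem _ _ hs, Set.IccExtend_of_mem _ _ hs, ← Real.dist_eq]
    exact ContinuousMap.dist_apply_le_dist _
  -- pointwise contraction estimate on Ioc
  have hKey : ∀ (G₁ G₂ T₁ T₂ : C(Set.Icc a b, ℝ)),
      (∀ t, ∀ ht : t ∈ Set.Ioc a b,
        T₁ ⟨t, Set.Ioc_subset_Icc_self ht⟩ = (t - a) ^ (1 - γ) * R G₁ t) →
      (∀ t, ∀ ht : t ∈ Set.Ioc a b,
        T₂ ⟨t, Set.Ioc_subset_Icc_self ht⟩ = (t - a) ^ (1 - γ) * R G₂ t) →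
      ∀ t, ∀ ht : t ∈ Set.Ioc a b,
        |T₁ ⟨t, Set.Ioc_subset_Icc_self ht⟩ - T₂ ⟨t, Set.Ioc_subset_Icc_self ht⟩|
          ≤ W * dist G₁ G₂ := by
    intro G₁ G₂ T₁ T₂ h₁ h₂ t ht
    have hta : 0 < t - a := sub_pos.mpr ht.1
    set D := dist G₁ G₂ with hD
    have hD0 : 0 ≤ D := dist_nonneg
    obtain ⟨H₁, H₁c, -, hHf₁⟩ := hHdata G₁
    obtain ⟨H₂, H₂c, -, hHf₂⟩ := hHdata G₂
    -- difference of the weighted representatives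
    have hHd : ∀ s ∈ Set.Ioc a b, |H₁ s - H₂ s| ≤ L * D := by
      intro s hs
      have hsa : 0 < s - a := sub_pos.mpr hs.1
      have e₁ : H₁ s = (s - a) ^ (1 - γ) * f s (zf G₁ s) := by
        rw [hHf₁ s hs, ← mul_assoc, canc hs.1, one_mul]
      have e₂ : H₂ s = (s - a) ^ (1 - γ) * f s (zf G₂ s) := by
        rw [hHf₂ s hs, ← mul_assoc, canc hs.1, one_mul]
      have hz : |zf G₁ s - zf G₂ s| ≤ (s - a) ^ (γ - 1) * D := by
        rw [hzf]
        show |(s - a) ^ (γ - 1) * Set.IccExtend hab.le ⇑G₁ s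
          - (s - a) ^ (γ - 1) * Set.IccExtend hab.le ⇑G₂ s| ≤ _
        rw [← mul_sub, abs_mul, abs_of_nonneg (Real.rpow_nonneg hsa.le _)]
        exact mul_le_mul_of_nonneg_left
          (hgdist G₁ G₂ s (Set.Ioc_subset_Icc_self hs)) (Real.rpow_nonneg hsa.le _)
      have h4 := hH4 s hs (zf G₁ s) (zf G₂ s)
      calc |H₁ s - H₂ s| = (s - a) ^ (1 - γ) * |f s (zf G₁ s) - f s (zf G₂ s)| := by
            rw [e₁, e₂, ← mul_sub, abs_mul, abs_of_nonneg (Real.rpow_nonneg hsa.le _)]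
        _ ≤ (s - a) ^ (1 - γ) * (L * ((s - a) ^ (γ - 1) * D)) := by
            apply mul_le_mul_of_nonneg_left _ (Real.rpow_nonneg hsa.le _)
            exact h4.trans (mul_le_mul_of_nonneg_left hz hL.le)
        _ = (L * D) * ((s - a) ^ (1 - γ) * (s - a) ^ (γ - 1)) := by ring
        _ = L * D := by rw [canc hs.1, mul_one]
    -- bound for the boundary integral difference
    have hIB : |(∫ s in a..b, (b - s) ^ (α - γ) * f s (zf G₁ s)) -
        ∫ s in a..b, (b - s) ^ (α - γ) * f s (zf G₂ s)|
        ≤ Real.Gamma (1 - γ + α) * Real.Gamma γ / Real.Gamma (α + 1) * (b - a) ^ α * (L * D) := by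
      have c₁ : ∫ s in a..b, (b - s) ^ (α - γ) * f s (zf G₁ s)
          = ∫ s in a..b, (b - s) ^ (α - γ) * ((s - a) ^ (γ - 1) * H₁ s) := by
        apply intervalIntegral.integral_congr_ae
        refine Filter.Eventually.of_forall (fun s hs => ?_)
        rw [Set.uIoc_of_le hab.le] at hs
        rw [hHf₁ s hs]
      have c₂ : ∫ s in a..b, (b - s) ^ (α - γ) * f s (zf G₂ s)
          = ∫ s in a..b, (b - s) ^ (α - γ) * ((s - a) ^ (γ - 1) * H₂ s) := by
        apply intervalIntegral.integral_congr_ae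
        refine Filter.Eventually.of_forall (fun s hs => ?_)
        rw [Set.uIoc_of_le hab.le] at hs
        rw [hHf₂ s hs]
      have i₁ : IntervalIntegrable
          (fun s => (b - s) ^ (α - γ) * ((s - a) ^ (γ - 1) * H₁ s)) volume a b :=
        kintH hab hrB hwγ H₁c.continuousOn
      have i₂ : IntervalIntegrable
          (fun s => (b - s) ^ (α - γ) * ((s - a) ^ (γ - 1) * H₂ s)) volume a b :=
        kintH hab hrB hwγ H₂c.continuousOn
      rw [c₁, c₂, ← intervalIntegral.integral_sub i₁ i₂]
      have c₃ : ∫ s in a..b, ((b - s) ^ (α - γ) * ((s - a) ^ (γ - 1) * H₁ s) -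
            (b - s) ^ (α - γ) * ((s - a) ^ (γ - 1) * H₂ s))
          = ∫ s in a..b, (b - s) ^ (α - γ) * ((s - a) ^ (γ - 1) * (H₁ s - H₂ s)) :=
        intervalIntegral.integral_congr (fun s _ => by ring)
      rw [c₃]
      have hb := kbound hab hrB hwγ (mul_nonneg hL.le hD0)
        (fun s hs => hHd s hs) (H := fun s => H₁ s - H₂ s)
      have eΓ : α - γ + 1 = 1 - γ + α := by ring
      have eΓ2 : α - γ + (γ - 1) + 2 = α + 1 := by ring
      have eE : α - γ + (γ - 1) + 1 = α := by ring
      have eγ' : γ - 1 + 1 = γ := by ring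
      rw [eΓ, eΓ2, eE, eγ'] at hb
      simpa using hb
    -- bound for the interior integral difference
    have hIα : |(∫ s in a..t, (t - s) ^ (α - 1) * f s (zf G₁ s)) -
        ∫ s in a..t, (t - s) ^ (α - 1) * f s (zf G₂ s)|
        ≤ Real.Gamma α * Real.Gamma γ / Real.Gamma (α + γ) *
          (t - a) ^ (α + γ - 1) * (L * D) := by
      have c₁ : ∫ s in a..t, (t - s) ^ (α - 1) * f s (zf G₁ s)
          = ∫ s in a..t, (t - s) ^ (α - 1) * ((s - a) ^ (γ - 1) * H₁ s) := by
        apply intervalIntegral.integral_congr_ae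
        refine Filter.Eventually.of_forall (fun s hs => ?_)
        rw [Set.uIoc_of_le ht.1.le] at hs
        rw [hHf₁ s ⟨hs.1, hs.2.trans ht.2⟩]
      have c₂ : ∫ s in a..t, (t - s) ^ (α - 1) * f s (zf G₂ s)
          = ∫ s in a..t, (t - s) ^ (α - 1) * ((s - a) ^ (γ - 1) * H₂ s) := by
        apply intervalIntegral.integral_congr_ae
        refine Filter.Eventually.of_forall (fun s hs => ?_)
        rw [Set.uIoc_of_le ht.1.le] at hs
        rw [hHf₂ s ⟨hs.1, hs.2.trans ht.2⟩]
      have i₁ : IntervalIntegrable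
          (fun s => (t - s) ^ (α - 1) * ((s - a) ^ (γ - 1) * H₁ s)) volume a t :=
        kintH ht.1 hrα hwγ H₁c.continuousOn
      have i₂ : IntervalIntegrable
          (fun s => (t - s) ^ (α - 1) * ((s - a) ^ (γ - 1) * H₂ s)) volume a t :=
        kintH ht.1 hrα hwγ H₂c.continuousOn
      rw [c₁, c₂, ← intervalIntegral.integral_sub i₁ i₂]
      have c₃ : ∫ s in a..t, ((t - s) ^ (α - 1) * ((s - a) ^ (γ - 1) * H₁ s) -
            (t - s) ^ (α - 1) * ((s - a) ^ (γ - 1) * H₂ s))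
          = ∫ s in a..t, (t - s) ^ (α - 1) * ((s - a) ^ (γ - 1) * (H₁ s - H₂ s)) :=
        intervalIntegral.integral_congr (fun s _ => by ring)
      rw [c₃]
      have hb := kbound ht.1 hrα hwγ (mul_nonneg hL.le hD0)
        (fun s hs => hHd s ⟨hs.1, hs.2.trans ht.2⟩) (H := fun s => H₁ s - H₂ s)
      have e1' : α - 1 + 1 = α := by ring
      have e2' : γ - 1 + 1 = γ := by ring
      have e3' : α - 1 + (γ - 1) + 2 = α + γ := by ring
      have e4' : α - 1 + (γ - 1) + 1 = α + γ - 1 := by ring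
      rw [e1', e2', e3', e4'] at hb
      simpa using hb
    -- assemble
    rw [h₁ t ht, h₂ t ht, hR]
    simp only []
    set I₁ := ∫ s in a..b, (b - s) ^ (α - γ) * f s (zf G₁ s) with hI₁
    set I₂ := ∫ s in a..b, (b - s) ^ (α - γ) * f s (zf G₂ s) with hI₂
    set B₁ := ∫ s in a..t, (t - s) ^ (α - 1) * f s (zf G₁ s) with hB₁
    set B₂ := ∫ s in a..t, (t - s) ^ (α - 1) * f s (zf G₂ s) with hB₂
    have split : (t - a) ^ (1 - γ) *
          ((t - a) ^ (γ - 1) / Real.Gamma γ * (e / (d * (1 + c / d))) -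
            1 / (1 + c / d) * ((t - a) ^ (γ - 1) / Real.Gamma γ) *
              (1 / Real.Gamma (1 - γ + α) * I₁) +
            1 / Real.Gamma α * B₁) -
        (t - a) ^ (1 - γ) *
          ((t - a) ^ (γ - 1) / Real.Gamma γ * (e / (d * (1 + c / d))) -
            1 / (1 + c / d) * ((t - a) ^ (γ - 1) / Real.Gamma γ) *
              (1 / Real.Gamma (1 - γ + α) * I₂) +
            1 / Real.Gamma α * B₂)
      = -((1 / (1 + c / d)) * (((t - a) ^ (1 - γ) * (t - a) ^ (γ - 1)) / Real.Gamma γ) *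
            ((1 / Real.Gamma (1 - γ + α)) * (I₁ - I₂))) +
        (1 / Real.Gamma α) * ((t - a) ^ (1 - γ) * (B₁ - B₂)) := by ring
    rw [split, canc ht.1]
    have habs : |(-((1 / (1 + c / d)) * ((1:ℝ) / Real.Gamma γ) *
            ((1 / Real.Gamma (1 - γ + α)) * (I₁ - I₂)))) +
          (1 / Real.Gamma α) * ((t - a) ^ (1 - γ) * (B₁ - B₂))|
        ≤ |1 / (1 + c / d)| * (1 / Real.Gamma γ) *
            ((1 / Real.Gamma (1 - γ + α)) * |I₁ - I₂|) +
          (1 / Real.Gamma α) * ((t - a) ^ (1 - γ) * |B₁ - B₂|) := by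
      refine (abs_add_le _ _).trans ?_
      have q1 : |(-((1 / (1 + c / d)) * ((1:ℝ) / Real.Gamma γ) *
            ((1 / Real.Gamma (1 - γ + α)) * (I₁ - I₂))))|
          = |1 / (1 + c / d)| * (1 / Real.Gamma γ) *
            ((1 / Real.Gamma (1 - γ + α)) * |I₁ - I₂|) := by
        rw [abs_neg, abs_mul, abs_mul, abs_mul,
          abs_of_nonneg (by positivity : (0:ℝ) ≤ 1 / Real.Gamma γ),
          abs_of_nonneg (by positivity : (0:ℝ) ≤ 1 / Real.Gamma (1 - γ + α))]
      have q2 : |(1 / Real.Gamma α) * ((t - a) ^ (1 - γ) * (B₁ - B₂))|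
          = (1 / Real.Gamma α) * ((t - a) ^ (1 - γ) * |B₁ - B₂|) := by
        rw [abs_mul, abs_mul,
          abs_of_nonneg (by positivity : (0:ℝ) ≤ 1 / Real.Gamma α),
          abs_of_nonneg (Real.rpow_nonneg hta.le _)]
      rw [q1, q2]
    refine habs.trans ?_
    have step1 : |1 / (1 + c / d)| * (1 / Real.Gamma γ) *
          ((1 / Real.Gamma (1 - γ + α)) * |I₁ - I₂|)
        ≤ |1 / (1 + c / d)| / Real.Gamma (α + 1) * (b - a) ^ α * (L * D) := by
      calc |1 / (1 + c / d)| * (1 / Real.Gamma γ) *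
            ((1 / Real.Gamma (1 - γ + α)) * |I₁ - I₂|)
          ≤ |1 / (1 + c / d)| * (1 / Real.Gamma γ) *
            ((1 / Real.Gamma (1 - γ + α)) *
              (Real.Gamma (1 - γ + α) * Real.Gamma γ / Real.Gamma (α + 1) *
                (b - a) ^ α * (L * D))) := by gcongr
        _ = |1 / (1 + c / d)| / Real.Gamma (α + 1) * (b - a) ^ α * (L * D) := by
            field_simp
    have ePB : (t - a) ^ (1 - γ) * (t - a) ^ (α + γ - 1) = (t - a) ^ α := by
      rw [← Real.rpow_add hta]; congr 1; ring
    have step2 : (1 / Real.Gamma α) * ((t - a) ^ (1 - γ) * |B₁ - B₂|)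
        ≤ Real.Gamma γ / Real.Gamma (γ + α) * (b - a) ^ α * (L * D) := by
      calc (1 / Real.Gamma α) * ((t - a) ^ (1 - γ) * |B₁ - B₂|)
          ≤ (1 / Real.Gamma α) * ((t - a) ^ (1 - γ) *
              (Real.Gamma α * Real.Gamma γ / Real.Gamma (α + γ) *
                (t - a) ^ (α + γ - 1) * (L * D))) := by gcongr
        _ = Real.Gamma γ / Real.Gamma (α + γ) *
              ((t - a) ^ (1 - γ) * (t - a) ^ (α + γ - 1)) * (L * D) := by
            field_simp
        _ = Real.Gamma γ / Real.Gamma (α + γ) * (t - a) ^ α * (L * D) := by rw [ePB]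
        _ ≤ Real.Gamma γ / Real.Gamma (α + γ) * (b - a) ^ α * (L * D) := by
            have hpow2 : (t - a) ^ α ≤ (b - a) ^ α :=
              Real.rpow_le_rpow hta.le (by linarith [ht.2]) hα0.le
            exact mul_le_mul_of_nonneg_right (mul_le_mul_of_nonneg_left hpow2
              (by positivity : (0:ℝ) ≤ Real.Gamma γ / Real.Gamma (α + γ)))
              (mul_nonneg hL.le hD0)
        _ = Real.Gamma γ / Real.Gamma (γ + α) * (b - a) ^ α * (L * D) := by
            rw [add_comm γ α]
    calc _ ≤ |1 / (1 + c / d)| / Real.Gamma (α + 1) * (b - a) ^ α * (L * D) +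
          Real.Gamma γ / Real.Gamma (γ + α) * (b - a) ^ α * (L * D) :=
        add_le_add step1 step2
      _ = W * D := by rw [hW]; ring
  -- full distance bound
  have hdist : ∀ (G₁ G₂ T₁ T₂ : C(Set.Icc a b, ℝ)),
      (∀ t, ∀ ht : t ∈ Set.Ioc a b,
        T₁ ⟨t, Set.Ioc_subset_Icc_self ht⟩ = (t - a) ^ (1 - γ) * R G₁ t) →
      (∀ t, ∀ ht : t ∈ Set.Ioc a b,
        T₂ ⟨t, Set.Ioc_subset_Icc_self ht⟩ = (t - a) ^ (1 - γ) * R G₂ t) →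
      dist T₁ T₂ ≤ W * dist G₁ G₂ := by
    intro G₁ G₂ T₁ T₂ h₁ h₂
    rw [ContinuousMap.dist_le (mul_nonneg hW0 dist_nonneg)]
    intro x
    rcases eq_or_lt_of_le x.2.1 with hxa | hxa
    · -- ↑x = a : limiting argument
      have hc1 : Continuous (Set.IccExtend hab.le ⇑T₁) := T₁.continuous.Icc_extend'
      have hc2 : Continuous (Set.IccExtend hab.le ⇑T₂) := T₂.continuous.Icc_extend'
      have htend : Filter.Tendsto
          (fun t => dist (Set.IccExtend hab.le ⇑T₁ t) (Set.IccExtend hab.le ⇑T₂ t))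
          (𝓝[Set.Ioc a b] a)
          (𝓝 (dist (Set.IccExtend hab.le ⇑T₁ a) (Set.IccExtend hab.le ⇑T₂ a))) :=
        ((hc1.dist hc2).tendsto a).mono_left nhdsWithin_le_nhds
      have hev : ∀ᶠ t in 𝓝[Set.Ioc a b] a,
          dist (Set.IccExtend hab.le ⇑T₁ t) (Set.IccExtend hab.le ⇑T₂ t)
            ≤ W * dist G₁ G₂ := by
        filter_upwards [self_mem_nhdsWithin] with t ht
        rw [Set.IccExtend_of_mem _ _ (Set.Ioc_subset_Icc_self ht),
          Set.IccExtend_of_mem _ _ (Set.Ioc_subset_Icc_self ht), Real.dist_eq]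
        exact hKey G₁ G₂ T₁ T₂ h₁ h₂ t ht
      have hle := le_of_tendsto htend hev
      rw [Set.IccExtend_of_mem _ _ (Set.left_mem_Icc.mpr hab.le),
        Set.IccExtend_of_mem _ _ (Set.left_mem_Icc.mpr hab.le)] at hle
      have hxx : x = ⟨a, Set.left_mem_Icc.mpr hab.le⟩ := Subtype.ext hxa.symm
      rw [hxx]
      exact hle
    · rw [Real.dist_eq]
      exact hKey G₁ G₂ T₁ T₂ h₁ h₂ ↑x ⟨hxa, x.2.2⟩
  -- the operator and its fixed point
  choose Φ hΦ using hT
  have hcontr : ContractingWith (Real.toNNReal W) Φ := by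
    constructor
    · rw [← Real.toNNReal_one]
      exact (Real.toNNReal_lt_toNNReal_iff (by norm_num)).mpr hH5
    · apply LipschitzWith.of_dist_le_mul
      intro G₁ G₂
      rw [Real.coe_toNNReal W hW0]
      exact hdist G₁ G₂ (Φ G₁) (Φ G₂) (hΦ G₁) (hΦ G₂)
  set Gs := ContractingWith.fixedPoint Φ hcontr with hGsdef
  have hfix : Φ Gs = Gs := hcontr.fixedPoint_isFixedPt
  have hGs : ∀ t, ∀ ht : t ∈ Set.Ioc a b,
      Gs ⟨t, Set.Ioc_subset_Icc_self ht⟩ = (t - a) ^ (1 - γ) * R Gs t := by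
    intro t ht
    have := hΦ Gs t ht
    rwa [hfix] at this
  refine ⟨zf Gs, ⟨memz Gs, ?_⟩, ?_⟩
  · -- zf Gs satisfies the integral equation
    intro t ht
    have h1 : zf Gs t = (t - a) ^ (γ - 1) * ((t - a) ^ (1 - γ) * R Gs t) := by
      rw [hzf]
      show (t - a) ^ (γ - 1) * Set.IccExtend hab.le ⇑Gs t = _
      rw [Set.IccExtend_of_mem _ _ (Set.Ioc_subset_Icc_self ht), hGs t ht]
    rw [← mul_assoc, canc2 ht.1, one_mul] at h1
    rw [hR] at h1
    exact h1
  · -- uniqueness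
    rintro w ⟨⟨Gw₀, hGw₀c, hGw₀e⟩, hwe⟩ t ht
    obtain ⟨Gw, hGwdef⟩ : ∃ Gw : C(Set.Icc a b, ℝ),
        Gw = ContinuousMap.mk ((Set.Icc a b).restrict Gw₀) hGw₀c.restrict := ⟨_, rfl⟩
    have hgw : ∀ s ∈ Set.Icc a b, Set.IccExtend hab.le ⇑Gw s = Gw₀ s := by
      intro s hs
      rw [Set.IccExtend_of_mem _ _ hs, hGwdef]
      rfl
    have hzw : ∀ s ∈ Set.Ioc a b, zf Gw s = w s := by
      intro s hs
      rw [hzf]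
      show (s - a) ^ (γ - 1) * Set.IccExtend hab.le ⇑Gw s = w s
      rw [hgw s (Set.Ioc_subset_Icc_self hs), hGw₀e s hs, ← mul_assoc,
        canc2 hs.1, one_mul]
    have hRw : ∀ t', t' ∈ Set.Ioc a b → R Gw t' = w t' := by
      intro t' ht'
      have hIb : ∫ s in a..b, (b - s) ^ (α - γ) * f s (zf Gw s)
          = ∫ s in a..b, (b - s) ^ (α - γ) * f s (w s) := by
        apply intervalIntegral.integral_congr_ae
        refine Filter.Eventually.of_forall (fun s hs => ?_)
        rw [Set.uIoc_of_le hab.le] at hs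
        rw [hzw s hs]
      have hIt : ∫ s in a..t', (t' - s) ^ (α - 1) * f s (zf Gw s)
          = ∫ s in a..t', (t' - s) ^ (α - 1) * f s (w s) := by
        apply intervalIntegral.integral_congr_ae
        refine Filter.Eventually.of_forall (fun s hs => ?_)
        rw [Set.uIoc_of_le ht'.1.le] at hs
        rw [hzw s ⟨hs.1, hs.2.trans ht'.2⟩]
      rw [hR]
      show (t' - a) ^ (γ - 1) / Real.Gamma γ * (e / (d * (1 + c / d))) -
          1 / (1 + c / d) * ((t' - a) ^ (γ - 1) / Real.Gamma γ) *
            (1 / Real.Gamma (1 - γ + α) *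
              ∫ s in a..b, (b - s) ^ (α - γ) * f s (zf Gw s)) +
          1 / Real.Gamma α * ∫ s in a..t', (t' - s) ^ (α - 1) * f s (zf Gw s) = w t'
      rw [hIb, hIt, ← hwe t' ht']
    -- Gw is a fixed point of Φ
    have hfixw : Φ Gw = Gw := by
      apply ContinuousMap.ext
      intro x
      have hmain : ∀ t', ∀ ht' : t' ∈ Set.Ioc a b,
          Φ Gw ⟨t', Set.Ioc_subset_Icc_self ht'⟩ = Gw ⟨t', Set.Ioc_subset_Icc_self ht'⟩ := by
        intro t' ht'
        rw [hΦ Gw t' ht', hRw t' ht']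
        have : Gw ⟨t', Set.Ioc_subset_Icc_self ht'⟩
            = Set.IccExtend hab.le ⇑Gw t' := by
          rw [Set.IccExtend_of_mem _ _ (Set.Ioc_subset_Icc_self ht')]
        rw [this, hgw t' (Set.Ioc_subset_Icc_self ht'), hGw₀e t' ht']
      rcases eq_or_lt_of_le x.2.1 with hxa | hxa
      · have hc1 : Continuous (Set.IccExtend hab.le ⇑(Φ Gw)) :=
          (Φ Gw).continuous.Icc_extend'
        have hc2 : Continuous (Set.IccExtend hab.le ⇑Gw) := Gw.continuous.Icc_extend'
        have htend1 : Filter.Tendsto (Set.IccExtend hab.le ⇑(Φ Gw))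
            (𝓝[Set.Ioc a b] a) (𝓝 (Set.IccExtend hab.le ⇑(Φ Gw) a)) :=
          (hc1.tendsto a).mono_left nhdsWithin_le_nhds
        have htend2 : Filter.Tendsto (Set.IccExtend hab.le ⇑Gw)
            (𝓝[Set.Ioc a b] a) (𝓝 (Set.IccExtend hab.le ⇑Gw a)) :=
          (hc2.tendsto a).mono_left nhdsWithin_le_nhds
        have hev : Set.IccExtend hab.le ⇑(Φ Gw) =ᶠ[𝓝[Set.Ioc a b] a]
            Set.IccExtend hab.le ⇑Gw := by
          filter_upwards [self_mem_nhdsWithin] with s hs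
          rw [Set.IccExtend_of_mem _ _ (Set.Ioc_subset_Icc_self hs),
            Set.IccExtend_of_mem _ _ (Set.Ioc_subset_Icc_self hs)]
          exact hmain s hs
        have heq := tendsto_nhds_unique (htend1.congr' hev) htend2
        rw [Set.IccExtend_of_mem _ _ (Set.left_mem_Icc.mpr hab.le),
          Set.IccExtend_of_mem _ _ (Set.left_mem_Icc.mpr hab.le)] at heq
        have hxx : x = ⟨a, Set.left_mem_Icc.mpr hab.le⟩ := Subtype.ext hxa.symm
        rw [hxx]
        exact heq
      · exact hmain ↑x ⟨hxa, x.2.2⟩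
    have hGwGs : Gw = Gs := hcontr.fixedPoint_unique hfixw
    have h1 : w t = zf Gw t := (hzw t ht).symm
    rw [h1, hGwGs]
end
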